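/- arXiv:1702.02220 — 11 statements merged into one kernel-verified Lean document; each statement's English description precedes it below -/
import Mathlib

section
/- Let N ≥ 1, let ψ : [0,∞) → ℝ be a strictly convex function, and let U ∈ U(N) be an N×N complex unitary matrix. Then Σ_{i,j} ψ(|U_{ij}|²) ≥ N²·ψ(1/N), with equality if and only if |U_{ij}| = 1/√N for all i,j, i.e. if and only if √N·U is a complex Hadamard matrix. -/
/-! The rows of a unitary matrix are unit vectors, so the `N²` numbers `|U i j|²` sum to `N`
and have mean `1/N`. Jensen's inequality for the strictly convex `ψ` gives the bound, with
equality exactly when all of them equal their mean. -/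

open Finset

section Jensen

variable {ι E : Type*} [AddCommGroup E] [Module ℝ E] {s : Set E} {f : E → ℝ} {t : Finset ι}
  {p : ι → E}

theorem ConvexOn.card_mul_map_mean_le (hf : ConvexOn ℝ s f) (hmem : ∀ i ∈ t, p i ∈ s) :
    #t * f ((#t : ℝ)⁻¹ • ∑ i ∈ t, p i) ≤ ∑ i ∈ t, f (p i) := by
  obtain rfl | ht := t.eq_empty_or_nonempty
  · simp
  have hcard : (0 : ℝ) < #t := by exact_mod_cast ht.card_pos
  have hjensen := hf.map_sum_le (w := fun _ ↦ (#t : ℝ)⁻¹) (fun _ _ ↦ by positivity)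
    (by simp [hcard.ne']) hmem
  rw [← smul_sum, ← smul_sum, smul_eq_mul] at hjensen
  exact (le_inv_mul_iff₀ hcard).mp hjensen

theorem StrictConvexOn.sum_map_eq_card_mul_map_mean_iff (hf : StrictConvexOn ℝ s f)
    (hmem : ∀ i ∈ t, p i ∈ s) :
    ∑ i ∈ t, f (p i) = #t * f ((#t : ℝ)⁻¹ • ∑ i ∈ t, p i) ↔
      ∀ j ∈ t, p j = (#t : ℝ)⁻¹ • ∑ i ∈ t, p i := by
  obtain rfl | ht := t.eq_empty_or_nonempty
  · simp
  have hcard : (0 : ℝ) < #t := by exact_mod_cast ht.card_pos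
  have hjensen := hf.map_sum_eq_iff (w := fun _ ↦ (#t : ℝ)⁻¹) (fun _ _ ↦ by positivity)
    (by simp [hcard.ne']) hmem
  rw [← smul_sum, ← smul_sum, smul_eq_mul] at hjensen
  rw [← hjensen, eq_inv_mul_iff_mul_eq₀ hcard.ne', eq_comm]

end Jensen

theorem Matrix.sum_norm_sq_row_eq_one {𝕜 n : Type*} [RCLike 𝕜] [Fintype n] [DecidableEq n]
    {U : Matrix n n 𝕜} (hU : U ∈ Matrix.unitaryGroup n 𝕜) (i : n) :
    ∑ j, ‖U i j‖ ^ 2 = 1 := by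
  have hdiag : (U * star U) i i = 1 := by
    rw [Matrix.mem_unitaryGroup_iff.mp hU, Matrix.one_apply_eq]
  simp only [Matrix.mul_apply, Matrix.star_apply, RCLike.star_def, RCLike.mul_conj] at hdiag
  exact_mod_cast hdiag

theorem Real.eq_one_div_sqrt_iff_sq_eq {a c : ℝ} (ha : 0 ≤ a) (hc : 0 ≤ c) :
    a = 1 / √c ↔ a ^ 2 = 1 / c := by
  rw [one_div, ← Real.sqrt_inv, eq_comm, Real.sqrt_eq_iff_eq_sq (inv_nonneg.mpr hc) ha, eq_comm,
    one_div]

theorem stmt0_general (N : ℕ) (ψ : ℝ → ℝ)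
    (hψ : StrictConvexOn ℝ (Set.Ici 0) ψ)
    (U : Matrix (Fin N) (Fin N) ℂ) (hU : U ∈ Matrix.unitaryGroup (Fin N) ℂ) :
    (N : ℝ) ^ 2 * ψ (1 / N) ≤ ∑ i, ∑ j, ψ (‖U i j‖ ^ 2) ∧
    ((∑ i, ∑ j, ψ (‖U i j‖ ^ 2) = (N : ℝ) ^ 2 * ψ (1 / N)) ↔
      ∀ i j, ‖U i j‖ = 1 / Real.sqrt N) := by
  set p : Fin N × Fin N → ℝ := fun q ↦ ‖U q.1 q.2‖ ^ 2
  have hmem : ∀ q ∈ univ, p q ∈ Set.Ici 0 := fun q _ ↦ Set.mem_Ici.mpr (sq_nonneg _)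
  have hcard : (#(univ : Finset (Fin N × Fin N)) : ℝ) = N ^ 2 := by simp [sq]
  have hmean : ((N : ℝ) ^ 2)⁻¹ • ∑ q, p q = 1 / N := by
    have htotal : ∑ q, p q = N := by
      simp [p, Fintype.sum_prod_type, Matrix.sum_norm_sq_row_eq_one hU]
    rcases eq_or_ne (N : ℝ) 0 with hN | hN
    · simp [htotal, hN]
    · rw [htotal, smul_eq_mul]
      field_simp
  have hsum : ∑ q, ψ (p q) = ∑ i, ∑ j, ψ (‖U i j‖ ^ 2) := Fintype.sum_prod_type _
  have hle := hψ.convexOn.card_mul_map_mean_le hmem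
  have heq := hψ.sum_map_eq_card_mul_map_mean_iff hmem
  rw [hcard, hmean, hsum] at hle heq
  refine ⟨hle, heq.trans ⟨fun h i j ↦ ?_, fun h q _ ↦ ?_⟩⟩
  · exact (Real.eq_one_div_sqrt_iff_sq_eq (norm_nonneg _) N.cast_nonneg).mpr
      (h (i, j) (mem_univ _))
  · exact (Real.eq_one_div_sqrt_iff_sq_eq (norm_nonneg _) N.cast_nonneg).mp (h q.1 q.2)

/-- For `N ≥ 1`, a strictly convex `ψ : [0,∞) → ℝ` and a unitary
`U ∈ U(N)`, one has `∑_{i,j} ψ(|U_{ij}|²) ≥ N² ψ(1/N)`, with equality iff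
`|U_{ij}| = 1/√N` for all `i, j` (i.e. `√N · U` is complex Hadamard). -/
theorem stmt0 (N : ℕ) (hN : 1 ≤ N) (ψ : ℝ → ℝ)
    (hψ : StrictConvexOn ℝ (Set.Ici 0) ψ)
    (U : Matrix (Fin N) (Fin N) ℂ) (hU : U ∈ Matrix.unitaryGroup (Fin N) ℂ) :
    (N : ℝ) ^ 2 * ψ (1 / N) ≤ ∑ i, ∑ j, ψ (‖U i j‖ ^ 2) ∧
    ((∑ i, ∑ j, ψ (‖U i j‖ ^ 2) = (N : ℝ) ^ 2 * ψ (1 / N)) ↔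
      ∀ i j, ‖U i j‖ = 1 / Real.sqrt N) :=
  stmt0_general N ψ hψ U hU
end

section
/- Let U ∈ U(N) be a local maximizer of the 1-norm on the unitary group U(N), i.e. there is a neighborhood of U in U(N) on which every unitary V satisfies ‖V‖₁ ≤ ‖U‖₁. Then all entries of U are nonzero: U_{ij} ≠ 0 for all i,j. -/
/-!
If `U i₀ j₀ = 0`, pick `i₁` with `U i₁ j₀ ≠ 0` and rotate the rows `i₀, i₁` of `U` by a real
Givens rotation of angle `t` and of angle `-t`. Entry by entry, the triangle inequality bounds the
two 1-norms together from below by `2 cos t ‖U‖₁`, and at `(i₀, j₀)`, where both rotated entries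
are `± sin t • U i₁ j₀`, by an extra `2 sin t ‖U i₁ j₀‖`. As `1 - cos t ≤ sin² t`, the gain of
order `t` beats the loss of order `t²`, so one of the two rotated unitaries has a larger 1-norm
than `U`, however small `t` is.
-/

open Filter Topology Finset

namespace Matrix

variable {n R : Type*}

theorem eventually_forall_norm_sub_lt [Fintype n] [SeminormedAddCommGroup R] (U : Matrix n n R)
    {ε : ℝ} (hε : 0 < ε) : ∀ᶠ V in 𝓝 U, ∀ i j, ‖V i j - U i j‖ < ε := by
  simp only [← dist_eq_norm]
  exact eventually_all.2 fun i => eventually_all.2 fun j =>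
    ((continuous_id.matrix_elem i j).tendsto U).eventually (Metric.ball_mem_nhds _ hε)

variable [DecidableEq n]

theorem exists_ne_zero_of_mem_unitaryGroup [Fintype n] [CommRing R] [StarRing R] [Nontrivial R]
    {U : Matrix n n R} (hU : U ∈ unitaryGroup n R) (j : n) : ∃ i, U i j ≠ 0 := by
  by_contra! hcol
  have hjj := congr_fun₂ (mem_unitaryGroup_iff'.mp hU) j j
  simp [mul_apply, hcol] at hjj

section Rotation

variable [CommRing R] (i₀ i₁ : n)

/-- `1 + (c - 1) P + s J`, where `P` projects onto the coordinates `i₀, i₁` and `J` is the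
quarter turn of that plane: left multiplication by it rotates the rows `i₀, i₁`. -/
def givensRotation (c s : R) : Matrix n n R :=
  1 + (c - 1) • (single i₀ i₀ 1 + single i₁ i₁ 1) + s • (single i₀ i₁ 1 - single i₁ i₀ 1)

variable {i₀ i₁}

theorem givensRotation_one_zero : givensRotation i₀ i₁ (1 : R) 0 = 1 := by
  simp [givensRotation]

variable [Fintype n]

theorem givensRotation_mul_apply_left (h : i₀ ≠ i₁) (c s : R) (U : Matrix n n R) (j : n) :
    (givensRotation i₀ i₁ c s * U) i₀ j = c * U i₀ j + s * U i₁ j := by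
  simp [givensRotation, add_mul, sub_mul, single_mul_apply_of_ne, h]

theorem givensRotation_mul_apply_right (h : i₀ ≠ i₁) (c s : R) (U : Matrix n n R) (j : n) :
    (givensRotation i₀ i₁ c s * U) i₁ j = c * U i₁ j - s * U i₀ j := by
  simp only [givensRotation, smul_add, smul_single, smul_eq_mul, mul_one, add_mul, one_mul,
    Algebra.smul_mul_assoc, sub_mul, add_apply, ne_eq, h.symm, not_false_eq_true,
    single_mul_apply_of_ne, single_mul_apply_same, zero_add, add_sub_cancel, smul_apply, sub_apply,
    zero_sub, mul_neg]
  ring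

theorem givensRotation_mul_apply_of_ne {i : n} (h₀ : i ≠ i₀) (h₁ : i ≠ i₁) (c s : R)
    (U : Matrix n n R) (j : n) : (givensRotation i₀ i₁ c s * U) i j = U i j := by
  simp [givensRotation, add_mul, sub_mul, single_mul_apply_of_ne, h₀, h₁]

theorem givensRotation_mem_unitaryGroup [StarRing R] (h : i₀ ≠ i₁) {c s : R} (hc : star c = c)
    (hs : star s = s) (hcs : c ^ 2 + s ^ 2 = 1) : givensRotation i₀ i₁ c s ∈ unitaryGroup n R := by
  set P : Matrix n n R := single i₀ i₀ 1 + single i₁ i₁ 1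
  set J : Matrix n n R := single i₀ i₁ 1 - single i₁ i₀ 1
  have hPP : P * P = P := by simp [P, add_mul, mul_add, single_mul_single_of_ne, h, h.symm]
  have hJJ : J * J = -P := by
    simp [P, J, sub_mul, mul_sub, single_mul_single_of_ne, h, h.symm]; abel
  have hPJ : P * J = J := by simp [P, J, add_mul, mul_sub, single_mul_single_of_ne, h, h.symm]
  have hJP : J * P = J := by
    simp [P, J, sub_mul, mul_add, single_mul_single_of_ne, h, h.symm]; abel
  have hPstar : star P = P := by simp [P, star_eq_conjTranspose]
  have hJstar : star J = -J := by simp [J, star_eq_conjTranspose]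
  have hG : givensRotation i₀ i₁ c s = 1 + (c - 1) • P + s • J := rfl
  clear_value P J
  rw [mem_unitaryGroup_iff, hG]
  simp only [star_add, star_smul, star_one, star_sub, hc, hs, hPstar, hJstar]
  simp only [mul_add, add_mul, mul_smul_comm, smul_mul_assoc, one_mul, mul_one, hPP, hJJ, hPJ,
    hJP, mul_neg, smul_neg]
  -- the product is `1 + (c ^ 2 + s ^ 2 - 1) • P`
  linear_combination (norm := module) hcs • P

end Rotation

end Matrix

theorem two_mul_norm_le_norm_add_add_norm_sub {E : Type*} [SeminormedAddCommGroup E]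
    [NormedSpace ℝ E] (a b : E) : 2 * ‖a‖ ≤ ‖a + b‖ + ‖a - b‖ :=
  calc 2 * ‖a‖ = ‖(a + b) + (a - b)‖ := by
        rw [add_add_sub_cancel, ← two_smul ℝ, norm_smul, Real.norm_two]
    _ ≤ ‖a + b‖ + ‖a - b‖ := norm_add_le _ _

theorem Real.one_sub_cos_le_sin_sq {x : ℝ} (hx : 0 ≤ Real.cos x) :
    1 - Real.cos x ≤ Real.sin x ^ 2 := by
  nlinarith [Real.cos_sq_add_sin_sq x, Real.cos_le_one x]

namespace Matrix

variable {n 𝕜 : Type*} [Fintype n] [DecidableEq n] [RCLike 𝕜]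

theorem two_mul_sum_norm_add_le_sum_norm_givensRotation_mul {i₀ i₁ j₀ : n} (h : i₀ ≠ i₁)
    {U : Matrix n n 𝕜} (hU : U i₀ j₀ = 0) {c : ℝ} (hc₀ : 0 ≤ c) (hc₁ : c ≤ 1) (s : ℝ) :
    2 * c * ∑ i, ∑ j, ‖U i j‖ + 2 * |s| * ‖U i₁ j₀‖ ≤
      ∑ i, ∑ j, ‖(givensRotation i₀ i₁ (c : 𝕜) s * U) i j‖ +
        ∑ i, ∑ j, ‖(givensRotation i₀ i₁ (c : 𝕜) (-s : 𝕜) * U) i j‖ := by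
  set V := givensRotation i₀ i₁ (c : 𝕜) s * U
  set W := givensRotation i₀ i₁ (c : 𝕜) (-s : 𝕜) * U
  set D : n → n → ℝ := fun i j => ‖V i j‖ + ‖W i j‖ - 2 * c * ‖U i j‖
  have hcU : ∀ x : 𝕜, ‖(c : 𝕜) * x‖ = c * ‖x‖ := fun x => by
    rw [norm_mul, RCLike.norm_ofReal, abs_of_nonneg hc₀]
  have hD : ∀ i j, 0 ≤ D i j := by
    intro i j
    by_cases hi₀ : i = i₀
    · subst hi₀
      have := two_mul_norm_le_norm_add_add_norm_sub ((c : 𝕜) * U i j) ((s : 𝕜) * U i₁ j)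
      simp only [D, V, W, givensRotation_mul_apply_left h, hcU, neg_mul, ← sub_eq_add_neg]
        at this ⊢
      linarith
    by_cases hi₁ : i = i₁
    · subst hi₁
      have := two_mul_norm_le_norm_add_add_norm_sub ((c : 𝕜) * U i j) ((s : 𝕜) * U i₀ j)
      simp only [D, V, W, givensRotation_mul_apply_right h, hcU, neg_mul, sub_neg_eq_add]
        at this ⊢
      linarith
    · simp only [D, V, W, givensRotation_mul_apply_of_ne hi₀ hi₁]
      nlinarith [norm_nonneg (U i j)]
  have hD₀ : D i₀ j₀ = 2 * |s| * ‖U i₁ j₀‖ := by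
    simp only [D, V, W, givensRotation_mul_apply_left h, hU, mul_zero, zero_add, norm_mul,
      norm_algebraMap', Real.norm_eq_abs, neg_mul, norm_neg, norm_zero, sub_zero]
    ring
  have hsum : D i₀ j₀ ≤ ∑ i, ∑ j, D i j :=
    (single_le_sum (fun j _ => hD i₀ j) (mem_univ j₀)).trans
      (single_le_sum (fun i _ => sum_nonneg fun j _ => hD i j) (mem_univ i₀))
  simp only [D, sum_sub_distrib, sum_add_distrib, ← mul_sum] at hsum
  linarith

theorem tendsto_givensRotation_mul_nhdsWithin_unitaryGroup {i₀ i₁ : n} (h : i₀ ≠ i₁)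
    {U : Matrix n n 𝕜} (hU : U ∈ unitaryGroup n 𝕜) :
    Tendsto (fun t : ℝ => givensRotation i₀ i₁ (Real.cos t : 𝕜) (Real.sin t) * U) (𝓝 0)
      (𝓝[unitaryGroup n 𝕜] U) := by
  refine tendsto_nhdsWithin_iff.2 ⟨Continuous.tendsto' ?_ 0 U ?_, .of_forall fun t => ?_⟩
  · simp only [givensRotation]
    fun_prop
  · simp [givensRotation_one_zero]
  · exact mul_mem (givensRotation_mem_unitaryGroup h (RCLike.conj_ofReal _)
      (RCLike.conj_ofReal _) (by exact_mod_cast Real.cos_sq_add_sin_sq t)) hU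

theorem apply_ne_zero_of_isLocalMaxOn_sum_norm {U : Matrix n n 𝕜} (hU : U ∈ unitaryGroup n 𝕜)
    (hmax : IsLocalMaxOn (fun V : Matrix n n 𝕜 => ∑ i, ∑ j, ‖V i j‖) (unitaryGroup n 𝕜) U)
    (i₀ j₀ : n) : U i₀ j₀ ≠ 0 := by
  intro h0
  obtain ⟨i₁, hi₁⟩ := exists_ne_zero_of_mem_unitaryGroup hU j₀
  have hne : i₀ ≠ i₁ := by rintro rfl; exact hi₁ h0
  set K := ∑ i, ∑ j, ‖U i j‖
  set m := ‖U i₁ j₀‖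
  set V : ℝ → Matrix n n 𝕜 := fun t => givensRotation i₀ i₁ (Real.cos t : 𝕜) (Real.sin t) * U
  have hVmax : ∀ᶠ t in 𝓝 0, ∑ i, ∑ j, ‖V t i j‖ ≤ K :=
    (tendsto_givensRotation_mul_nhdsWithin_unitaryGroup hne hU).eventually hmax
  have hsin : ∀ᶠ t in 𝓝 0, Real.sin t * K < m :=
    ((Real.continuous_sin.tendsto' 0 0 Real.sin_zero).mul_const K).eventually_lt_const
      (by simpa [m] using hi₁)
  have hnear : ∀ᶠ t in 𝓝[>] (0 : ℝ), t ∈ Set.Ioo 0 (Real.pi / 2) ∧ Real.sin t * K < m ∧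
      ∑ i, ∑ j, ‖V t i j‖ ≤ K ∧ ∑ i, ∑ j, ‖V (-t) i j‖ ≤ K := by
    filter_upwards [Ioo_mem_nhdsGT (by positivity : (0 : ℝ) < Real.pi / 2),
      nhdsWithin_le_nhds hsin, nhdsWithin_le_nhds hVmax,
      nhdsWithin_le_nhds ((continuous_neg.tendsto' 0 0 neg_zero).eventually hVmax)]
      with t ht hsinK hVt hVnegt using ⟨ht, hsinK, hVt, hVnegt⟩
  obtain ⟨t, ⟨ht₀, htπ⟩, hsinK, hVt, hVnegt⟩ := hnear.exists
  have hcos : 0 < Real.cos t := Real.cos_pos_of_mem_Ioo ⟨by linarith, htπ⟩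
  have hsin₀ : 0 < Real.sin t := Real.sin_pos_of_pos_of_lt_pi ht₀ (by linarith [Real.pi_pos])
  have hVneg : V (-t) = givensRotation i₀ i₁ (Real.cos t : 𝕜) (-Real.sin t : 𝕜) * U := by
    simp [V, Real.cos_neg, Real.sin_neg]
  have hgain := two_mul_sum_norm_add_le_sum_norm_givensRotation_mul hne h0 hcos.le
    (Real.cos_le_one t) (Real.sin t)
  rw [← hVneg, abs_of_pos hsin₀] at hgain
  -- `sin t * m ≤ (1 - cos t) * K ≤ sin t ^ 2 * K < sin t * m`
  nlinarith [mul_le_mul_of_nonneg_right (Real.one_sub_cos_le_sin_sq hcos.le)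
      (by positivity : 0 ≤ K), mul_lt_mul_of_pos_left hsinK hsin₀]

end Matrix

/-- If `U ∈ U(N)` locally maximizes the 1-norm `‖V‖₁ = ∑_{i,j} |V_{ij}|`
on the unitary group, then all entries of `U` are nonzero. -/
theorem stmt1 (N : ℕ) (U : Matrix (Fin N) (Fin N) ℂ)
    (hU : U ∈ Matrix.unitaryGroup (Fin N) ℂ)
    (hmax : ∃ ε > (0 : ℝ), ∀ V ∈ Matrix.unitaryGroup (Fin N) ℂ,
      (∀ i j, ‖V i j - U i j‖ < ε) →
        ∑ i, ∑ j, ‖V i j‖ ≤ ∑ i, ∑ j, ‖U i j‖) :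
    ∀ i j, U i j ≠ 0 := by
  obtain ⟨ε, hε, hloc⟩ := hmax
  refine Matrix.apply_ne_zero_of_isLocalMaxOn_sum_norm hU ?_
  filter_upwards [nhdsWithin_le_nhds (Matrix.eventually_forall_norm_sub_lt U hε),
    self_mem_nhdsWithin] with V hclose hV using hloc V hV hclose
end

section
/- Let φ : (0,∞) → ℝ be a differentiable function and let U ∈ U(N) be a unitary matrix with all entries nonzero. Define W ∈ M_N(ℂ) by W_{ij} = sgn(U_{ij})·φ'(|U_{ij}|). Then the derivative at t = 0 of the function t ↦ Σ_{i,j} φ(|(U·exp(tA))_{ij}|) vanishes for every anti-hermitian matrix A ∈ M_N(ℂ) (A* = −A) if and only if the matrix W·U* is self-adjoint. -/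
/-!
Differentiating entrywise, `d/dt ∑ φ(|(U e^{tA})ᵢⱼ|)` at `0` equals `Re tr(Wᴴ U A)`: the derivative
of `|z(t)|` is `Re(conj(sgn z) z')`. The real-orthogonal complement of the skew-hermitian matrices
for the pairing `Re tr(M A)` consists of the hermitian matrices, so the derivative vanishes for all
anti-hermitian `A` iff `Wᴴ U` is hermitian, and conjugating by the unitary `U` turns this into
`W Uᴴ = U (Wᴴ U)ᴴ Uᴴ` being hermitian.
-/

open scoped ComplexConjugate Matrix

noncomputable def csgn (z : ℂ) : ℂ := z / (‖z‖ : ℂ)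

open scoped RealInnerProductSpace

theorem HasDerivAt.norm_of_ne_zero {F : Type*} [NormedAddCommGroup F] [InnerProductSpace ℝ F]
    {f : ℝ → F} {f' : F} {x : ℝ} (hf : HasDerivAt f f' x) (h0 : f x ≠ 0) :
    HasDerivAt (‖f ·‖) (⟪f x, f'⟫ / ‖f x‖) x := by
  have hsq : ‖f x‖ ^ 2 ≠ 0 := by positivity
  convert hf.norm_sq.sqrt hsq using 1
  · simp only [Real.sqrt_sq (norm_nonneg _)]
  · rw [Real.sqrt_sq (norm_nonneg _)]
    field_simp

theorem hasDerivAt_comp_norm_of_ne_zero {φ : ℝ → ℝ} {f : ℝ → ℂ} {w : ℂ} {t : ℝ}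
    (hf : HasDerivAt f w t) (h0 : f t ≠ 0) (hφ : DifferentiableAt ℝ φ ‖f t‖) :
    HasDerivAt (fun s => φ ‖f s‖) (conj (csgn (f t) * deriv φ ‖f t‖) * w).re t := by
  refine (hφ.hasDerivAt.comp t (hf.norm_of_ne_zero h0)).congr_deriv ?_
  rw [Complex.inner, csgn, map_mul, map_div₀, Complex.conj_ofReal, Complex.conj_ofReal,
    div_mul_eq_mul_div, div_mul_eq_mul_div, Complex.div_ofReal_re, mul_comm w, mul_right_comm,
    Complex.re_mul_ofReal]
  ring

theorem Matrix.hasDerivAt_mul_exp_smul_apply {n : Type*} [Fintype n] [DecidableEq n]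
    (U A : Matrix n n ℂ) (i j : n) :
    HasDerivAt (fun t : ℝ => (U * NormedSpace.exp (t • A)) i j) ((U * A) i j) 0 := by
  -- any submultiplicative norm will do: it induces the product topology, which is all `exp` sees
  let : NormedRing (Matrix n n ℂ) := Matrix.linftyOpNormedRing
  let : NormedAlgebra ℝ (Matrix n n ℂ) := Matrix.linftyOpNormedAlgebra
  have hexp := (hasDerivAt_exp_smul_const (𝕂 := ℝ) A 0).const_mul U
  rw [zero_smul, NormedSpace.exp_zero, one_mul] at hexp
  exact (entryLinearMap ℝ ℂ i j).toContinuousLinearMap.hasFDerivAt.comp_hasDerivAt 0 hexp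

theorem Matrix.trace_conjTranspose_mul_eq_sum {m n : Type*} [Fintype m] [Fintype n]
    (W B : Matrix m n ℂ) : (Wᴴ * B).trace = ∑ i, ∑ j, conj (W i j) * B i j := by
  simp only [trace, diag_apply, mul_apply, conjTranspose_apply, RCLike.star_def]
  exact Finset.sum_comm

theorem hasDerivAt_sum_comp_norm_apply {m n : Type*} [Fintype m] [Fintype n] {φ : ℝ → ℝ}
    {M : ℝ → Matrix m n ℂ} {M' : Matrix m n ℂ} {t : ℝ}
    (hM : ∀ i j, HasDerivAt (fun s => M s i j) (M' i j) t) (hne : ∀ i j, M t i j ≠ 0)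
    (hφ : ∀ i j, DifferentiableAt ℝ φ ‖M t i j‖) :
    HasDerivAt (fun s => ∑ i, ∑ j, φ ‖M s i j‖)
      ((Matrix.of fun i j => csgn (M t i j) * deriv φ ‖M t i j‖)ᴴ * M').trace.re t := by
  simp only [Matrix.trace_conjTranspose_mul_eq_sum, Complex.re_sum, Matrix.of_apply]
  exact .fun_sum fun i _ => .fun_sum fun j _ =>
    hasDerivAt_comp_norm_of_ne_zero (hM i j) (hne i j) (hφ i j)

namespace Matrix

variable {n : Type*} [Fintype n]

theorem re_trace_conjTranspose_mul_of_skew (M : Matrix n n ℂ) {A : Matrix n n ℂ}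
    (hA : Aᴴ = -A) : (Mᴴ * A).trace.re = -(M * A).trace.re := by
  have : (Mᴴ * A).trace = -conj (M * A).trace := by
    rw [starRingEnd_apply, ← trace_conjTranspose, conjTranspose_mul, hA, Matrix.neg_mul,
      trace_neg, neg_neg, trace_mul_comm]
  rw [this, Complex.neg_re, Complex.conj_re]

open ComplexOrder in
theorem isHermitian_iff_forall_skew_re_trace_mul_eq_zero (M : Matrix n n ℂ) :
    M.IsHermitian ↔ ∀ A : Matrix n n ℂ, Aᴴ = -A → (M * A).trace.re = 0 := by
  refine ⟨fun hM A hA => ?_, fun h => ?_⟩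
  · have := M.re_trace_conjTranspose_mul_of_skew hA
    rw [hM.eq] at this
    linarith
  -- test against the skew-hermitian part `B = M - Mᴴ`: this forces `Re tr(Bᴴ B) = 0`
  set B := M - Mᴴ
  have hBskew : Bᴴ = -B := by rw [conjTranspose_sub, conjTranspose_conjTranspose, neg_sub]
  have hsplit : B * B = M * B - Mᴴ * B := Matrix.sub_mul M Mᴴ B
  have hBB : (Bᴴ * B).trace.re = 0 := by
    have hMB := h B hBskew
    have hMHB := M.re_trace_conjTranspose_mul_of_skew hBskew
    rw [hBskew, Matrix.neg_mul, trace_neg, Complex.neg_re, hsplit, trace_sub, Complex.sub_re]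
    linarith
  have hBB_im := (Complex.nonneg_iff.1 (posSemidef_conjTranspose_mul_self B).trace_nonneg).2
  have hB : B = 0 := trace_conjTranspose_mul_self_eq_zero_iff.1 (Complex.ext hBB hBB_im.symm)
  exact (sub_eq_zero.1 hB).symm

theorem isHermitian_conjTranspose_mul_iff {α : Type*} [DecidableEq n] [CommRing α] [StarRing α]
    {U : Matrix n n α} (hU : U ∈ unitaryGroup n α) (W : Matrix n n α) :
    (Wᴴ * U).IsHermitian ↔ (W * Uᴴ).IsHermitian := by
  have hUU : Uᴴ * U = 1 := hU.1
  have hUU' : U * Uᴴ = 1 := hU.2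
  constructor
  · intro h
    convert isHermitian_mul_mul_conjTranspose U h.conjTranspose using 1
    simp only [conjTranspose_mul, conjTranspose_conjTranspose, ← Matrix.mul_assoc, hUU',
      Matrix.one_mul]
  · intro h
    convert isHermitian_conjTranspose_mul_mul U h.conjTranspose using 1
    simp only [conjTranspose_mul, conjTranspose_conjTranspose, ← Matrix.mul_assoc, hUU,
      Matrix.one_mul]

end Matrix

/-- For a differentiable `φ : (0,∞) → ℝ` and `U ∈ U(N)` with nonzero
entries, setting `W_{ij} = sgn(U_{ij}) φ'(|U_{ij}|)`, the derivative at `t = 0` of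
`t ↦ ∑_{i,j} φ(|(U·exp(tA))_{ij}|)` vanishes for every anti-hermitian `A` iff
`W·U*` is self-adjoint. -/
theorem stmt2 (N : ℕ) (φ : ℝ → ℝ) (hφ : ∀ x > (0 : ℝ), DifferentiableAt ℝ φ x)
    (U : Matrix (Fin N) (Fin N) ℂ) (hU : U ∈ Matrix.unitaryGroup (Fin N) ℂ)
    (hne : ∀ i j, U i j ≠ 0)
    (W : Matrix (Fin N) (Fin N) ℂ)
    (hW : W = Matrix.of fun i j => csgn (U i j) * deriv φ ‖U i j‖) :
    (∀ A : Matrix (Fin N) (Fin N) ℂ, Aᴴ = -A →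
      HasDerivAt
        (fun t : ℝ => ∑ i, ∑ j,
          φ ‖(U * NormedSpace.exp (t • A)) i j‖)
        0 0) ↔
    (W * Uᴴ).IsHermitian := by
  have hderiv (A : Matrix (Fin N) (Fin N) ℂ) :
      HasDerivAt (fun t : ℝ => ∑ i, ∑ j, φ ‖(U * NormedSpace.exp (t • A)) i j‖)
        (Wᴴ * U * A).trace.re 0 := by
    have h := hasDerivAt_sum_comp_norm_apply (U.hasDerivAt_mul_exp_smul_apply A)
      (by simpa using hne) (fun i j => hφ _ (by simpa using hne i j))
    simpa [hW, Matrix.mul_assoc] using h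
  rw [← Matrix.isHermitian_conjTranspose_mul_iff hU,
    Matrix.isHermitian_iff_forall_skew_re_trace_mul_eq_zero]
  exact forall₂_congr fun A _ => ⟨fun h => (hderiv A).unique h, fun h => h ▸ hderiv A⟩
end

section
/- Let U ∈ U(N) be a unitary matrix that is circulant, meaning U_{ij} = γ_{j−i} for some vector γ ∈ ℂ^N with indices taken modulo N, and self-adjoint (U* = U, equivalently conj(γ_i) = γ_{−i} for all i). Then U is balanced: for all r, s > 0 the matrices U_r·U_s* and U_r*·U_s are self-adjoint. -/
open scoped Matrix

/-!
Taking color components is an entrywise map commuting with `star`, so the color components of a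
self-adjoint circulant matrix are self-adjoint circulant matrices. Circulant matrices commute, and
the product of two commuting self-adjoint matrices is self-adjoint.
-/

open Matrix

/-- the color component `U_r` of a matrix `U`. -/
noncomputable def colorComp {n : Type*} (U : Matrix n n ℂ) (r : ℝ) :
    Matrix n n ℂ :=
  Matrix.of fun i j => if ‖U i j‖ = r then csgn (U i j) else 0

/-- a matrix is balanced when `U_r·U_s*` and `U_r*·U_s` are self-adjoint
for all `r, s > 0`. -/
def IsBalanced {n : Type*} [Fintype n] (U : Matrix n n ℂ) : Prop :=
  ∀ r s : ℝ, 0 < r → 0 < s →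
    (colorComp U r * (colorComp U s)ᴴ).IsHermitian ∧
    ((colorComp U r)ᴴ * colorComp U s).IsHermitian

noncomputable def colorCoeff (r : ℝ) (z : ℂ) : ℂ :=
  if ‖z‖ = r then csgn z else 0

lemma colorComp_eq_map {n : Type*} (U : Matrix n n ℂ) (r : ℝ) :
    colorComp U r = U.map (colorCoeff r) :=
  rfl

lemma star_csgn (z : ℂ) : star (csgn z) = csgn (star z) := by
  simp [csgn]

lemma semiconj_colorCoeff_star (r : ℝ) : Function.Semiconj (colorCoeff r) star star := by
  intro z
  simp only [colorCoeff, Complex.star_def, Complex.norm_conj]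
  split_ifs
  · exact (star_csgn z).symm
  · exact (star_zero _).symm

lemma isHermitian_colorComp {n : Type*} {U : Matrix n n ℂ} (hU : U.IsHermitian) (r : ℝ) :
    (colorComp U r).IsHermitian := by
  rw [colorComp_eq_map, IsHermitian, ← conjTranspose_map _ (semiconj_colorCoeff_star r), hU.eq]

lemma isBalanced_of_isHermitian_of_commute {n : Type*} [Fintype n] {U : Matrix n n ℂ}
    (hU : U.IsHermitian) (hcomm : ∀ r s, Commute (colorComp U r) (colorComp U s)) :
    IsBalanced U := by
  intro r s _ _
  have hr := isHermitian_colorComp hU r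
  have hs := isHermitian_colorComp hU s
  rw [hr.eq, hs.eq]
  exact ⟨(hr.commute_iff hs).mp (hcomm r s), (hr.commute_iff hs).mp (hcomm r s)⟩

lemma commute_colorComp_of_apply_eq_sub {N : ℕ} {γ : Fin N → ℂ} {U : Matrix (Fin N) (Fin N) ℂ}
    (hcirc : ∀ i j, U i j = γ (j - i)) (r s : ℝ) :
    Commute (colorComp U r) (colorComp U s) := by
  -- Mathlib's `circulant v i j = v (i - j)`, the transpose of the convention `γ (j - i)`.
  obtain rfl : U = (circulant γ)ᵀ := ext hcirc
  simp only [colorComp_eq_map, transpose_map, map_circulant]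
  rw [Commute, SemiconjBy, ← transpose_mul, ← transpose_mul, Fin.circulant_mul_comm]

theorem stmt6_general (N : ℕ) (γ : Fin N → ℂ) (U : Matrix (Fin N) (Fin N) ℂ)
    (hcirc : ∀ i j, U i j = γ (j - i))
    (hsa : U.IsHermitian) :
    IsBalanced U :=
  isBalanced_of_isHermitian_of_commute hsa (commute_colorComp_of_apply_eq_sub hcirc)

/-- A circulant (`U_{ij} = γ_{j−i}`, indices mod `N`) self-adjoint
unitary matrix is balanced. -/
theorem stmt6 (N : ℕ) (γ : Fin N → ℂ) (U : Matrix (Fin N) (Fin N) ℂ)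
    (hU : U ∈ Matrix.unitaryGroup (Fin N) ℂ)
    (hcirc : ∀ i j, U i j = γ (j - i))
    (hsa : U.IsHermitian) :
    IsBalanced U :=
  stmt6_general N γ U hcirc hsa
end

section
/- Let ψ : [0,∞) → ℝ be twice differentiable, let U ∈ U(N) be unitary, and let A ∈ M_N(ℂ) be anti-hermitian. Then the second derivative at t = 0 of f(t) = Σ_{i,j} ψ(|(U·exp(tA))_{ij}|²) equals f''(0) = 4·Σ_{i,j} ψ''(|U_{ij}|²)·(Re[(UA)_{ij}·conj(U_{ij})])² + 2·Σ_{i,j} ψ'(|U_{ij}|²)·Re[(UA²)_{ij}·conj(U_{ij})] + 2·Σ_{i,j} ψ'(|U_{ij}|²)·|(UA)_{ij}|². -/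
open scoped Matrix ComplexConjugate RealInnerProductSpace

/-!
Each entry `m(t) = (U exp(tA))ᵢⱼ` is a curve in `ℂ` with `m' = (U exp(tA) A)ᵢⱼ` and
`m'' = (U exp(tA) A²)ᵢⱼ`. Viewing `ℂ` as a real inner product space, `Re (z * conj w) = ⟪w, z⟫`,
so the chain rule gives `(ψ ∘ ‖m‖²)' = 2 ⟪m, m'⟫ ψ'(‖m‖²)`, and the product rule applied once
more produces the three terms: `ψ''` times `(2 ⟪m, m'⟫)²`, and `2 ψ'` times `⟪m, m''⟫ + ‖m'‖²`.
-/

section NormSqCurve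

variable {F : Type*} [NormedAddCommGroup F] [InnerProductSpace ℝ F]

theorem DifferentiableOn.hasDerivAt_comp_norm_sq {φ : ℝ → ℝ}
    (hφ : DifferentiableOn ℝ φ (Set.Ici 0)) {m : ℝ → F} {m' : F} {t : ℝ}
    (hm : HasDerivAt m m' t) :
    HasDerivAt (fun u => φ (‖m u‖ ^ 2))
      (2 * ⟪m t, m'⟫ * derivWithin φ (Set.Ici 0) (‖m t‖ ^ 2)) t :=
  (hφ _ (sq_nonneg ‖m t‖)).hasDerivWithinAt.scomp_hasDerivAt t hm.norm_sq
    fun u => sq_nonneg ‖m u‖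

theorem hasDerivAt_inner_mul_derivWithin_comp_norm_sq {ψ : ℝ → ℝ}
    (hψ' : DifferentiableOn ℝ (derivWithin ψ (Set.Ici 0)) (Set.Ici 0))
    {m m' : ℝ → F} {m'' : F} {t : ℝ} (hm : HasDerivAt m (m' t) t)
    (hm' : HasDerivAt m' m'' t) :
    HasDerivAt (fun u => 2 * ⟪m u, m' u⟫ * derivWithin ψ (Set.Ici 0) (‖m u‖ ^ 2))
      (4 * derivWithin (derivWithin ψ (Set.Ici 0)) (Set.Ici 0) (‖m t‖ ^ 2) * ⟪m t, m' t⟫ ^ 2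
        + 2 * derivWithin ψ (Set.Ici 0) (‖m t‖ ^ 2) * ⟪m t, m''⟫
        + 2 * derivWithin ψ (Set.Ici 0) (‖m t‖ ^ 2) * ‖m' t‖ ^ 2) t := by
  refine (((hm.inner ℝ hm').const_mul 2).mul (hψ'.hasDerivAt_comp_norm_sq hm)).congr_deriv ?_
  rw [real_inner_self_eq_norm_sq]
  ring

end NormSqCurve

section MatrixExp

-- Any normed algebra structure on matrices will do: only entries, in `𝕜`, are read off.
attribute [local instance] Matrix.linftyOpNormedRing Matrix.linftyOpNormedAlgebra

theorem Matrix.hasDerivAt_mul_exp_smul_mul_apply {𝕜 n : Type*} [RCLike 𝕜] [Fintype n]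
    [DecidableEq n] (U A B : Matrix n n 𝕜) (i j : n) (t : ℝ) :
    HasDerivAt (fun s : ℝ => (U * NormedSpace.exp (s • A) * B) i j)
      ((U * NormedSpace.exp (t • A) * A * B) i j) t := by
  have hexp := (((hasDerivAt_exp_smul_const (𝕂 := ℝ) A t).const_mul U).mul_const B)
  simp only [← mul_assoc] at hexp
  exact ((Matrix.entryLinearMap 𝕜 𝕜 i j).restrictScalars ℝ).toContinuousLinearMap.hasFDerivAt
    |>.comp_hasDerivAt t hexp

end MatrixExp

theorem stmt9_general (N : ℕ) (ψ : ℝ → ℝ)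
    (hψ : DifferentiableOn ℝ ψ (Set.Ici 0))
    (hψ' : DifferentiableOn ℝ (derivWithin ψ (Set.Ici 0)) (Set.Ici 0))
    (U : Matrix (Fin N) (Fin N) ℂ)
    (A : Matrix (Fin N) (Fin N) ℂ) :
    HasDerivAt
      (deriv (fun t : ℝ => ∑ i, ∑ j,
        ψ (‖(U * NormedSpace.exp (t • A)) i j‖ ^ 2)))
      (4 * (∑ i, ∑ j,
          derivWithin (derivWithin ψ (Set.Ici 0)) (Set.Ici 0) (‖U i j‖ ^ 2) *
            (((U * A) i j * conj (U i j)).re) ^ 2) +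
        2 * (∑ i, ∑ j,
          derivWithin ψ (Set.Ici 0) (‖U i j‖ ^ 2) *
            ((U * A * A) i j * conj (U i j)).re) +
        2 * (∑ i, ∑ j,
          derivWithin ψ (Set.Ici 0) (‖U i j‖ ^ 2) *
            ‖(U * A) i j‖ ^ 2))
      0 := by
  set m : Fin N → Fin N → ℝ → ℂ := fun i j s => (U * NormedSpace.exp (s • A)) i j
  set m' : Fin N → Fin N → ℝ → ℂ := fun i j s => (U * NormedSpace.exp (s • A) * A) i j
  have hm (i j : Fin N) (s : ℝ) : HasDerivAt (m i j) (m' i j s) s := by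
    simpa using Matrix.hasDerivAt_mul_exp_smul_mul_apply U A 1 i j s
  have hm' (i j : Fin N) : HasDerivAt (m' i j) ((U * A * A) i j) 0 := by
    simpa using Matrix.hasDerivAt_mul_exp_smul_mul_apply U A A i j 0
  have hderiv : deriv (fun t => ∑ i, ∑ j, ψ (‖m i j t‖ ^ 2)) = fun t => ∑ i, ∑ j,
      2 * ⟪m i j t, m' i j t⟫ * derivWithin ψ (Set.Ici 0) (‖m i j t‖ ^ 2) :=
    funext fun t => (HasDerivAt.fun_sum fun i _ => HasDerivAt.fun_sum fun j _ =>
      hψ.hasDerivAt_comp_norm_sq (hm i j t)).deriv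
  have hm0 (i j : Fin N) : m i j 0 = U i j := by simp [m]
  have hm'0 (i j : Fin N) : m' i j 0 = (U * A) i j := by simp [m']
  rw [hderiv]
  refine (HasDerivAt.fun_sum fun i _ => HasDerivAt.fun_sum fun j _ =>
    hasDerivAt_inner_mul_derivWithin_comp_norm_sq hψ' (hm i j 0) (hm' i j)).congr_deriv ?_
  simp only [hm0, hm'0, Complex.inner, Finset.mul_sum, ← Finset.sum_add_distrib, mul_assoc]

/-- For `ψ : [0,∞) → ℝ` twice differentiable, `U ∈ U(N)` and `A`
anti-hermitian, the second derivative at `t = 0` of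
`f(t) = ∑_{i,j} ψ(|(U·exp(tA))_{ij}|²)` equals
`4·∑ ψ''(|U_{ij}|²)·(Re[(UA)_{ij}·conj U_{ij}])² + 2·∑ ψ'(|U_{ij}|²)·Re[(UA²)_{ij}·conj U_{ij}]
 + 2·∑ ψ'(|U_{ij}|²)·|(UA)_{ij}|²`. -/
theorem stmt9 (N : ℕ) (ψ : ℝ → ℝ)
    (hψ : DifferentiableOn ℝ ψ (Set.Ici 0))
    (hψ' : DifferentiableOn ℝ (derivWithin ψ (Set.Ici 0)) (Set.Ici 0))
    (U : Matrix (Fin N) (Fin N) ℂ) (hU : U ∈ Matrix.unitaryGroup (Fin N) ℂ)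
    (A : Matrix (Fin N) (Fin N) ℂ) (hA : Aᴴ = -A) :
    HasDerivAt
      (deriv (fun t : ℝ => ∑ i, ∑ j,
        ψ (‖(U * NormedSpace.exp (t • A)) i j‖ ^ 2)))
      (4 * (∑ i, ∑ j,
          derivWithin (derivWithin ψ (Set.Ici 0)) (Set.Ici 0) (‖U i j‖ ^ 2) *
            (((U * A) i j * conj (U i j)).re) ^ 2) +
        2 * (∑ i, ∑ j,
          derivWithin ψ (Set.Ici 0) (‖U i j‖ ^ 2) *
            ((U * A * A) i j * conj (U i j)).re) +
        2 * (∑ i, ∑ j,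
          derivWithin ψ (Set.Ici 0) (‖U i j‖ ^ 2) *
            ‖(U * A) i j‖ ^ 2))
      0 :=
  stmt9_general N ψ hψ hψ' U A
end

section
/- Let N ≥ 2 and let X ∈ M_N(ℝ) be a symmetric matrix with eigenvalues λ_N ≤ λ_{N−1} ≤ … ≤ λ₁ (listed with multiplicity). Then Tr(X·A²) ≤ 0 holds for every antisymmetric real matrix A ∈ M_N(ℝ) (Aᵗ = −A) if and only if the sum of the two smallest eigenvalues is nonnegative: λ_N + λ_{N−1} ≥ 0. -/
/-!
Diagonalise `X = U D Uᵀ` with `U` orthogonal. Conjugation by `U` permutes the antisymmetric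
matrices and preserves the trace, so we may assume `X = diag(λ)`. For antisymmetric `B`,
`Tr(diag(λ) B²) = -∑_{i,j} λᵢ Bᵢⱼ² = -½ ∑_{i,j} (λᵢ + λⱼ) Bᵢⱼ²` with `Bᵢᵢ = 0`, which is
nonpositive when all `λᵢ + λⱼ` with `i ≠ j` are nonnegative; conversely the elementary
antisymmetric matrix `Eᵢⱼ - Eⱼᵢ` gives `Tr(diag(λ) (Eᵢⱼ - Eⱼᵢ)²) = -(λᵢ + λⱼ)`.
-/

open scoped Matrix

namespace Matrix

variable {n R : Type*} [Fintype n] [DecidableEq n]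

section CommRing

variable [CommRing R]

omit [DecidableEq n] in
lemma transpose_conj_eq_neg {A : Matrix n n R} (hA : Aᵀ = -A) (U : Matrix n n R) :
    (Uᵀ * A * U)ᵀ = -(Uᵀ * A * U) := by
  simp [transpose_mul, hA, Matrix.mul_assoc]

lemma trace_conj_mul_mul_self {U : Matrix n n R} (hU : Uᵀ * U = 1) (D A : Matrix n n R) :
    trace (U * D * Uᵀ * (A * A)) = trace (D * ((Uᵀ * A * U) * (Uᵀ * A * U))) := by
  have hU' : U * Uᵀ = 1 := mul_eq_one_comm.mp hU
  calc trace (U * D * Uᵀ * (A * A)) = trace (D * Uᵀ * (A * A) * U) := by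
        rw [← trace_mul_comm U, Matrix.mul_assoc U, Matrix.mul_assoc U]
    _ = trace (D * ((Uᵀ * A * U) * (Uᵀ * A * U))) := by
        simp only [Matrix.mul_assoc]
        rw [← Matrix.mul_assoc U, hU', Matrix.one_mul]

lemma single_sub_single_mul_self {i j : n} (hij : i ≠ j) :
    (single i j (1 : R) - single j i 1) * (single i j 1 - single j i 1)
      = -(single i i 1 + single j j 1) := by
  rw [sub_mul, mul_sub, mul_sub, single_mul_single_same, single_mul_single_same,
    single_mul_single_of_ne (h := hij.symm), single_mul_single_of_ne (h := hij), mul_one]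
  abel

lemma trace_diagonal_mul_single_sub_single_sq (d : n → R) {i j : n} (hij : i ≠ j) :
    trace (diagonal d * ((single i j 1 - single j i 1) * (single i j 1 - single j i 1)))
      = -(d i + d j) := by
  simp [single_sub_single_mul_self hij, Matrix.mul_add, trace_add, trace_mul_single, add_comm]

lemma two_mul_trace_diagonal_mul_mul_self {B : Matrix n n R} (hB : Bᵀ = -B) (d : n → R) :
    2 * trace (diagonal d * (B * B)) = -∑ i, ∑ j, (d i + d j) * B i j ^ 2 := by
  have hBji : ∀ i j, B j i = -B i j := fun i j => by
    simpa using congrFun (congrFun hB i) j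
  have htr : trace (diagonal d * (B * B)) = -∑ i, ∑ j, d i * B i j ^ 2 := by
    simp only [trace, diag, diagonal_mul]
    simp only [mul_apply, Finset.mul_sum, ← Finset.sum_neg_distrib]
    refine Finset.sum_congr rfl fun i _ => Finset.sum_congr rfl fun j _ => ?_
    rw [hBji]
    ring
  have hsymm : ∑ i, ∑ j, d j * B i j ^ 2 = ∑ i, ∑ j, d i * B i j ^ 2 := by
    rw [Finset.sum_comm]
    refine Finset.sum_congr rfl fun i _ => Finset.sum_congr rfl fun j _ => ?_
    rw [hBji i j, neg_sq]
  simp only [htr, add_mul, Finset.sum_add_distrib, hsymm]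
  ring

variable [PartialOrder R]

lemma forall_trace_conj_mul_mul_self_nonpos_iff {U : Matrix n n R} (hU : Uᵀ * U = 1)
    (D : Matrix n n R) :
    (∀ A : Matrix n n R, Aᵀ = -A → trace (U * D * Uᵀ * (A * A)) ≤ 0) ↔
      ∀ B : Matrix n n R, Bᵀ = -B → trace (D * (B * B)) ≤ 0 := by
  refine ⟨fun h B hB => ?_, fun h A hA => ?_⟩
  · have hUBU : Uᵀ * (U * B * Uᵀ) * U = B := by
      simp only [← Matrix.mul_assoc, hU, Matrix.one_mul]
      rw [Matrix.mul_assoc, hU, Matrix.mul_one]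
    have hconj := h (U * B * Uᵀ) (by simpa using transpose_conj_eq_neg hB Uᵀ)
    rwa [trace_conj_mul_mul_self hU, hUBU] at hconj
  · rw [trace_conj_mul_mul_self hU]
    exact h _ (transpose_conj_eq_neg hA U)

end CommRing

lemma forall_trace_diagonal_mul_mul_self_nonpos_iff [CommRing R] [LinearOrder R]
    [IsStrictOrderedRing R] (d : n → R) :
    (∀ B : Matrix n n R, Bᵀ = -B → trace (diagonal d * (B * B)) ≤ 0) ↔
      ∀ i j, i ≠ j → 0 ≤ d i + d j := by
  refine ⟨fun h i j hij => ?_, fun h B hB => ?_⟩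
  · have hE := h (single i j 1 - single j i 1) (by simp [transpose_sub])
    rw [trace_diagonal_mul_single_sub_single_sq d hij] at hE
    exact neg_nonpos.mp hE
  · have hBii : ∀ i, B i i = 0 := fun i => by
      have := congrFun (congrFun hB i) i
      simp only [transpose_apply, neg_apply] at this
      linarith
    have hsum : 0 ≤ ∑ i, ∑ j, (d i + d j) * B i j ^ 2 :=
      Finset.sum_nonneg fun i _ => Finset.sum_nonneg fun j _ => by
        rcases eq_or_ne i j with rfl | hij
        · simp [hBii]
        · exact mul_nonneg (h i j hij) (sq_nonneg _)
    linarith [two_mul_trace_diagonal_mul_mul_self hB d]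

lemma IsHermitian.eq_eigenvectorUnitary_mul_diagonal_mul_transpose {X : Matrix n n ℝ}
    (hX : X.IsHermitian) :
    X = (hX.eigenvectorUnitary : Matrix n n ℝ) * diagonal hX.eigenvalues *
      (hX.eigenvectorUnitary : Matrix n n ℝ)ᵀ := by
  rw [← conjTranspose_eq_transpose_of_trivial]
  simpa [Function.comp, Unitary.conjStarAlgAut_apply, star_eq_conjTranspose] using hX.spectral_theorem

end Matrix

theorem stmt12_general (N : ℕ) (X : Matrix (Fin N) (Fin N) ℝ)
    (hX : X.IsHermitian) :
    (∀ A : Matrix (Fin N) (Fin N) ℝ, Aᵀ = -A → Matrix.trace (X * (A * A)) ≤ 0) ↔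
    (∀ i j : Fin N, i ≠ j → 0 ≤ hX.eigenvalues i + hX.eigenvalues j) := by
  set U : Matrix (Fin N) (Fin N) ℝ := ↑hX.eigenvectorUnitary
  have hU : Uᵀ * U = 1 := by
    rw [← Matrix.conjTranspose_eq_transpose_of_trivial]
    exact Matrix.mem_unitaryGroup_iff'.mp hX.eigenvectorUnitary.2
  have hconj := Matrix.forall_trace_conj_mul_mul_self_nonpos_iff hU (.diagonal hX.eigenvalues)
  rw [← hX.eq_eigenvectorUnitary_mul_diagonal_mul_transpose] at hconj
  rw [hconj, Matrix.forall_trace_diagonal_mul_mul_self_nonpos_iff]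

/-- For `N ≥ 2` and a real symmetric matrix `X`, one has
`Tr(X·A²) ≤ 0` for every antisymmetric real `A` iff the sum of the two smallest
eigenvalues of `X` is nonnegative, i.e. iff `λ_i + λ_j ≥ 0` for all pairs of
distinct indices (eigenvalues listed with multiplicity). -/
theorem stmt12 (N : ℕ) (hN : 2 ≤ N) (X : Matrix (Fin N) (Fin N) ℝ)
    (hX : X.IsHermitian) :
    (∀ A : Matrix (Fin N) (Fin N) ℝ, Aᵀ = -A → Matrix.trace (X * (A * A)) ≤ 0) ↔
    (∀ i j : Fin N, i ≠ j → 0 ≤ hX.eigenvalues i + hX.eigenvalues j) :=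
  stmt12_general N X hX
end

section
/- Let N ≥ 3 and let U = (1/N)·(2·J_N − N·I_N) ∈ M_N(ℝ), where J_N is the all-ones matrix and I_N the identity. If B ∈ M_N(ℝ) is symmetric and satisfies U·B = λ·B for some real λ, then Φ(U,B) = λ·((N−4)/2)·[Tr(B²) + (λ·N/(N−2))·Σ_i B_{ii}²]. -/
open scoped Matrix

/-- the sign `sgn(x) = x/|x|` of a real number (with `sgn 0 = 0`). -/
noncomputable def rsgn (x : ℝ) : ℝ := x / |x|

/-- the real form of `Φ`: `Φ(U,B) = Tr(Sᵗ·U·B²) − ∑_{i,j} (UB)_{ij}²/|U_{ij}|`,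
where `S_{ij} = sgn(U_{ij})`. -/
noncomputable def PhiR {N : ℕ} (U B : Matrix (Fin N) (Fin N) ℝ) : ℝ :=
  Matrix.trace ((Matrix.of fun i j => rsgn (U i j))ᵀ * U * (B * B)) -
    ∑ i, ∑ j, ((U * B) i j) ^ 2 / |U i j|

/-- For `N ≥ 3`, `U = (1/N)(2·J_N − N·I_N)` and a real symmetric `B`
with `U·B = λ·B`, one has
`Φ(U,B) = λ·((N−4)/2)·[Tr(B²) + (λN/(N−2))·∑_i B_{ii}²]`. -/
theorem stmt14 (N : ℕ) (hN : 3 ≤ N) (U B : Matrix (Fin N) (Fin N) ℝ)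
    (hU : U = Matrix.of fun i j =>
      if i = j then (2 - (N : ℝ)) / N else 2 / N)
    (hB : B.IsSymm) (lam : ℝ) (hlam : U * B = lam • B) :
    PhiR U B = lam * ((N - 4) / 2) *
      (Matrix.trace (B * B) + lam * N / (N - 2) * ∑ i, (B i i) ^ 2) := by
  have hN3 : (3:ℝ) ≤ (N:ℝ) := by exact_mod_cast hN
  have hNpos : (0:ℝ) < N := by linarith
  have hN0 : (N:ℝ) ≠ 0 := ne_of_gt hNpos
  have hN2 : (0:ℝ) < (N:ℝ) - 2 := by linarith
  have hN2' : (N:ℝ) - 2 ≠ 0 := ne_of_gt hN2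
  have hBs : ∀ i j, B j i = B i j := fun i j => hB.apply i j
  set T := ∑ i, ∑ j, (B i j)^2 with hT
  set D := ∑ i, (B i i)^2 with hD
  -- key column-sum identity
  have key : ∀ i j, (∑ k, B k j) = ((N:ℝ) * (1 + lam) / 2) * B i j := by
    intro i j
    have h := congrFun (congrFun hlam i) j
    rw [hU] at h
    simp only [Matrix.mul_apply, Matrix.smul_apply, Matrix.of_apply, smul_eq_mul] at h
    have hsum : ∀ k, (if i = k then (2 - (N:ℝ))/N else 2/N) * B k j
        = (2/N) * B k j + (if i = k then (-1:ℝ) * B k j else 0) := by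
      intro k
      split_ifs with hik
      · field_simp
        ring
      · ring
    rw [Finset.sum_congr rfl fun k _ => hsum k, Finset.sum_add_distrib,
        Finset.sum_ite_eq, ← Finset.mul_sum] at h
    simp only [Finset.mem_univ, if_true, neg_one_mul] at h
    field_simp at h ⊢
    linarith [h]
  -- consequence: sum of squared column sums
  have sumc : ∑ k, (∑ i, B i k) * (∑ i, B i k) = ((N:ℝ) * (1 + lam) / 2) * T := by
    have step : ∀ k, (∑ i, B i k) * (∑ i, B i k)
        = ((N:ℝ) * (1 + lam) / 2) * ∑ i, (B i k)^2 := by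
      intro k
      rw [Finset.sum_mul, Finset.mul_sum]
      apply Finset.sum_congr rfl
      intro i _
      rw [key i k]
      ring
    rw [Finset.sum_congr rfl fun k _ => step k, ← Finset.mul_sum, hT, Finset.sum_comm]
  -- trace of B*B
  have hTrBB : Matrix.trace (B * B) = T := by
    rw [Matrix.trace, hT]
    apply Finset.sum_congr rfl
    intro i _
    rw [Matrix.diag_apply, Matrix.mul_apply]
    exact Finset.sum_congr rfl fun k _ => by rw [hBs k i, sq]
  have hTrBB' : ∑ i, (B * B) i i = T := hTrBB
  -- the sign matrix
  have hS : (Matrix.of fun i j => rsgn (U i j))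
      = Matrix.of (fun i j => (if i = j then (-1:ℝ) else 1)) := by
    ext i j
    rw [hU]
    simp only [Matrix.of_apply]
    split_ifs with hij
    · have hx : (2 - (N:ℝ))/N < 0 := div_neg_of_neg_of_pos (by linarith) hNpos
      rw [rsgn, abs_of_neg hx, div_neg, div_self (ne_of_lt hx)]
    · have hx : (0:ℝ) < 2/(N:ℝ) := by positivity
      rw [rsgn, abs_of_pos hx, div_self (ne_of_gt hx)]
  have hUBB : U * (B * B) = lam • (B * B) := by
    rw [← Matrix.mul_assoc, hlam, Matrix.smul_mul]
  -- first term
  have tr1 : Matrix.trace ((Matrix.of fun i j => rsgn (U i j))ᵀ * U * (B * B))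
      = lam * (((N:ℝ) * (1 + lam) / 2) * T - 2 * T) := by
    rw [Matrix.mul_assoc, hUBB, hS, Matrix.mul_smul, Matrix.trace_smul, smul_eq_mul]
    congr 1
    rw [Matrix.trace]
    have expand : ∀ i : Fin N, ((Matrix.of fun i j => (if i = j then (-1:ℝ) else 1))ᵀ
        * (B * B)).diag i = (∑ j, (B * B) j i) + (-2) * (B * B) i i := by
      intro i
      rw [Matrix.diag_apply, Matrix.mul_apply]
      have : ∀ j, (Matrix.of fun i j => (if i = j then (-1:ℝ) else 1))ᵀ i j * (B * B) j i
          = (B * B) j i + (if j = i then (-2) * (B * B) j i else 0) := by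
        intro j
        simp only [Matrix.transpose_apply, Matrix.of_apply]
        split_ifs with h
        · ring
        · ring
      rw [Finset.sum_congr rfl fun j _ => this j, Finset.sum_add_distrib,
        Finset.sum_ite_eq', if_pos (Finset.mem_univ i)]
    rw [Finset.sum_congr rfl fun i _ => expand i, Finset.sum_add_distrib]
    have h1 : ∑ i : Fin N, ∑ j, (B * B) j i = ((N:ℝ) * (1 + lam) / 2) * T := by
      rw [← sumc]
      calc ∑ i : Fin N, ∑ j, (B * B) j i
          = ∑ i : Fin N, ∑ j, ∑ k, B j k * B k i := by
            simp only [Matrix.mul_apply]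
        _ = ∑ j : Fin N, ∑ i, ∑ k, B j k * B k i := Finset.sum_comm
        _ = ∑ j : Fin N, ∑ k, ∑ i, B j k * B k i :=
            Finset.sum_congr rfl fun j _ => Finset.sum_comm
        _ = ∑ j : Fin N, ∑ k, B j k * ∑ i, B k i := by
            simp only [← Finset.mul_sum]
        _ = ∑ j : Fin N, ∑ k, B j k * ∑ i, B i k := by
            apply Finset.sum_congr rfl; intro j _
            apply Finset.sum_congr rfl; intro k _
            congr 1
            exact Finset.sum_congr rfl fun i _ => hBs i k
        _ = ∑ k : Fin N, ∑ j, B j k * ∑ i, B i k := Finset.sum_comm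
        _ = ∑ k : Fin N, (∑ j, B j k) * ∑ i, B i k := by
            simp only [← Finset.sum_mul]
    rw [h1, ← Finset.mul_sum, hTrBB']
    ring
  -- second term
  have hUB : ∀ i j, (U * B) i j = lam * B i j := by
    intro i j
    rw [hlam]
    simp
  have habs : ∀ i j, |U i j| = if i = j then ((N:ℝ)-2)/N else 2/N := by
    intro i j
    rw [hU]
    simp only [Matrix.of_apply]
    split_ifs with hij
    · have hx : (2 - (N:ℝ))/N < 0 := div_neg_of_neg_of_pos (by linarith) hNpos
      rw [abs_of_neg hx]
      ring
    · have hx : (0:ℝ) < 2/(N:ℝ) := by positivity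
      rw [abs_of_pos hx]
  have tr2 : ∑ i, ∑ j, ((U * B) i j) ^ 2 / |U i j|
      = lam^2 * ((N:ℝ)/2) * T + lam^2 * ((N:ℝ)/((N:ℝ)-2) - (N:ℝ)/2) * D := by
    have ptw : ∀ i j, ((U * B) i j) ^ 2 / |U i j|
        = lam^2 * (B i j)^2 * ((N:ℝ)/2)
          + (if i = j then lam^2 * (B i j)^2 * ((N:ℝ)/((N:ℝ)-2) - (N:ℝ)/2) else 0) := by
      intro i j
      rw [hUB, habs]
      split_ifs with hij
      · rw [div_div_eq_mul_div]
        ring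
      · rw [div_div_eq_mul_div]
        ring
    calc ∑ i, ∑ j, ((U * B) i j) ^ 2 / |U i j|
        = ∑ i, ∑ j, (lam^2 * (B i j)^2 * ((N:ℝ)/2)
          + (if i = j then lam^2 * (B i j)^2 * ((N:ℝ)/((N:ℝ)-2) - (N:ℝ)/2) else 0)) := by
          exact Finset.sum_congr rfl fun i _ => Finset.sum_congr rfl fun j _ => ptw i j
      _ = (∑ i, ∑ j, lam^2 * (B i j)^2 * ((N:ℝ)/2))
          + ∑ i : Fin N, lam^2 * (B i i)^2 * ((N:ℝ)/((N:ℝ)-2) - (N:ℝ)/2) := by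
          have inner : ∀ i : Fin N, ∑ j, (lam^2 * (B i j)^2 * ((N:ℝ)/2)
              + (if i = j then lam^2 * (B i j)^2 * ((N:ℝ)/((N:ℝ)-2) - (N:ℝ)/2) else 0))
              = (∑ j, lam^2 * (B i j)^2 * ((N:ℝ)/2))
                + lam^2 * (B i i)^2 * ((N:ℝ)/((N:ℝ)-2) - (N:ℝ)/2) := by
            intro i
            rw [Finset.sum_add_distrib, Finset.sum_ite_eq, if_pos (Finset.mem_univ i)]
          rw [Finset.sum_congr rfl fun i _ => inner i, Finset.sum_add_distrib]
      _ = lam^2 * ((N:ℝ)/2) * T + lam^2 * ((N:ℝ)/((N:ℝ)-2) - (N:ℝ)/2) * D := by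
          rw [hT, hD, Finset.mul_sum]
          congr 1
          · apply Finset.sum_congr rfl
            intro i _
            rw [Finset.mul_sum]
            exact Finset.sum_congr rfl fun j _ => by ring
          · rw [Finset.mul_sum]
            exact Finset.sum_congr rfl fun i _ => by ring
  rw [PhiR, tr1, tr2, hTrBB]
  field_simp
  ring
end

section
/- Let N ≥ 3 with N ≠ 4, and let U = (1/N)·(2·J_N − N·I_N) ∈ M_N(ℝ), where J_N is the all-ones matrix and I_N the identity. Then U does not locally maximize the 1-norm on the unitary group U(N); equivalently, the matrix K_N = √N·U is not a complex almost Hadamard matrix. -/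
/-!
Mix two rows `a ≠ b` of a real orthogonal matrix by the complex rotation
`[[cos θ, i sin θ], [i sin θ, cos θ]]`. In each column the entries `x, y` of these rows get
moduli `√(cos²θ x² + sin²θ y²)` and `√(sin²θ x² + cos²θ y²)`, whose sum is at least `|x| + |y|`,
strictly so when `|x| ≠ |y|` and `sin 2θ ≠ 0`. Small `θ` thus gives nearby unitaries of strictly
larger 1-norm as soon as some column has entries of different modulus in rows `a` and `b`. For
`U = (2/N) J - I` the diagonal and off-diagonal entries have moduli `|N - 2|/N` and `2/N`, which
differ precisely when `N ≠ 4`.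
-/

open Complex

section
variable {c s x y : ℝ}

lemma sqrt_mul_sqrt_of_sq_add_sq_eq_one (h : c ^ 2 + s ^ 2 = 1) :
    √((c * x) ^ 2 + (s * y) ^ 2) * √((s * x) ^ 2 + (c * y) ^ 2) =
      √((x * y) ^ 2 + (c * s * (x ^ 2 - y ^ 2)) ^ 2) := by
  rw [← Real.sqrt_mul (by positivity)]
  congr 1
  linear_combination x ^ 2 * y ^ 2 * (c ^ 2 + s ^ 2 + 1) * h

lemma sq_sqrt_add_sqrt_of_sq_add_sq_eq_one (h : c ^ 2 + s ^ 2 = 1) :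
    (√((c * x) ^ 2 + (s * y) ^ 2) + √((s * x) ^ 2 + (c * y) ^ 2)) ^ 2 =
      (|x| + |y|) ^ 2 + 2 * (√((x * y) ^ 2 + (c * s * (x ^ 2 - y ^ 2)) ^ 2) - |x * y|) := by
  rw [← sqrt_mul_sqrt_of_sq_add_sq_eq_one h, add_sq, Real.sq_sqrt (by positivity),
    Real.sq_sqrt (by positivity), add_sq, abs_mul, sq_abs, sq_abs]
  linear_combination (x ^ 2 + y ^ 2) * h

lemma abs_add_abs_le_sqrt_add_sqrt (h : c ^ 2 + s ^ 2 = 1) :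
    |x| + |y| ≤ √((c * x) ^ 2 + (s * y) ^ 2) + √((s * x) ^ 2 + (c * y) ^ 2) := by
  have hxy : |x * y| ≤ √((x * y) ^ 2 + (c * s * (x ^ 2 - y ^ 2)) ^ 2) := by
    rw [← Real.sqrt_sq_eq_abs]
    exact Real.sqrt_le_sqrt (le_add_of_nonneg_right (sq_nonneg _))
  rw [← pow_le_pow_iff_left₀ (by positivity) (by positivity) two_ne_zero,
    sq_sqrt_add_sqrt_of_sq_add_sq_eq_one h]
  linarith

lemma abs_add_abs_lt_sqrt_add_sqrt (h : c ^ 2 + s ^ 2 = 1) (hcs : c * s ≠ 0) (hxy : |x| ≠ |y|) :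
    |x| + |y| < √((c * x) ^ 2 + (s * y) ^ 2) + √((s * x) ^ 2 + (c * y) ^ 2) := by
  have hsq : x ^ 2 - y ^ 2 ≠ 0 := sub_ne_zero.mpr (by rwa [Ne, sq_eq_sq_iff_abs_eq_abs])
  have hxy : |x * y| < √((x * y) ^ 2 + (c * s * (x ^ 2 - y ^ 2)) ^ 2) := by
    rw [← Real.sqrt_sq_eq_abs]
    exact Real.sqrt_lt_sqrt (sq_nonneg _) (lt_add_of_pos_right _ (by positivity))
  rw [← pow_lt_pow_iff_left₀ (by positivity) (by positivity) two_ne_zero,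
    sq_sqrt_add_sqrt_of_sq_add_sq_eq_one h]
  linarith

end

namespace Matrix

variable {ι : Type*} [DecidableEq ι]

noncomputable def rotateRows (a b : ι) (θ : ℝ) (M : Matrix ι ι ℂ) : Matrix ι ι ℂ :=
  of fun i => if i = a then (Real.cos θ : ℂ) • M a + (I * Real.sin θ) • M b
    else if i = b then (I * Real.sin θ) • M a + (Real.cos θ : ℂ) • M b else M i

variable {a b : ι} (θ : ℝ) (M : Matrix ι ι ℂ)

@[simp] lemma rotateRows_apply_left (k : ι) :
    rotateRows a b θ M a k = Real.cos θ * M a k + I * Real.sin θ * M b k := by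
  simp [rotateRows]

@[simp] lemma rotateRows_apply_right (hab : a ≠ b) (k : ι) :
    rotateRows a b θ M b k = I * Real.sin θ * M a k + Real.cos θ * M b k := by
  simp [rotateRows, hab.symm]

lemma rotateRows_apply_of_ne {i : ι} (ha : i ≠ a) (hb : i ≠ b) (k : ι) :
    rotateRows a b θ M i k = M i k := by
  simp [rotateRows, ha, hb]

lemma rotateRows_neg_rotateRows (hab : a ≠ b) :
    rotateRows a b (-θ) (rotateRows a b θ M) = M := by
  have h : (Real.cos θ : ℂ) ^ 2 + (Real.sin θ : ℂ) ^ 2 = 1 := by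
    exact_mod_cast Real.cos_sq_add_sin_sq θ
  ext i k
  by_cases ha : i = a
  · subst ha
    simp only [rotateRows_apply_left, rotateRows_apply_right _ _ hab, Real.cos_neg, Real.sin_neg,
      ofReal_neg]
    linear_combination M i k * h - M i k * (Real.sin θ : ℂ) ^ 2 * I_sq
  by_cases hb : i = b
  · subst hb
    simp only [rotateRows_apply_left, rotateRows_apply_right _ _ hab, Real.cos_neg, Real.sin_neg,
      ofReal_neg]
    linear_combination M i k * h - M i k * (Real.sin θ : ℂ) ^ 2 * I_sq
  simp only [rotateRows_apply_of_ne _ _ ha hb]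

lemma star_rotateRows_one (hab : a ≠ b) :
    star (rotateRows a b θ (1 : Matrix ι ι ℂ)) = rotateRows a b (-θ) 1 := by
  ext i k
  rw [star_apply]
  by_cases hka : k = a <;> by_cases hkb : k = b <;> by_cases hia : i = a <;> by_cases hib : i = b <;>
    simp_all [rotateRows, one_apply, -ofReal_cos, -ofReal_sin, eq_comm]

lemma norm_rotateRows_map_ofReal_left (A : Matrix ι ι ℝ) (k : ι) :
    ‖rotateRows a b θ (A.map (↑)) a k‖ =
      √((Real.cos θ * A a k) ^ 2 + (Real.sin θ * A b k) ^ 2) := by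
  rw [rotateRows_apply_left, ← norm_add_mul_I]
  simp only [map_apply, ofReal_mul]
  ring_nf

lemma norm_rotateRows_map_ofReal_right (hab : a ≠ b) (A : Matrix ι ι ℝ) (k : ι) :
    ‖rotateRows a b θ (A.map (↑)) b k‖ =
      √((Real.sin θ * A a k) ^ 2 + (Real.cos θ * A b k) ^ 2) := by
  rw [rotateRows_apply_right _ _ hab, add_comm ((Real.sin θ * A a k) ^ 2), ← norm_add_mul_I]
  simp only [map_apply, ofReal_mul]
  ring_nf

variable [Fintype ι]

lemma sum_norm_rotateRows_sub (hab : a ≠ b) (k : ι) :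
    ∑ i, ‖rotateRows a b θ M i k‖ - ∑ i, ‖M i k‖ =
      ‖rotateRows a b θ M a k‖ + ‖rotateRows a b θ M b k‖ - (‖M a k‖ + ‖M b k‖) := by
  rw [← Finset.sum_sub_distrib, Fintype.sum_eq_add a b hab fun i hi => by
    rw [rotateRows_apply_of_ne _ _ hi.1 hi.2, sub_self]]
  ring

lemma rotateRows_one_mul : rotateRows a b θ 1 * M = rotateRows a b θ M := by
  ext i k
  rw [mul_apply]
  by_cases ha : i = a
  · subst ha
    simp [rotateRows, add_mul, Finset.sum_add_distrib, one_apply, mul_assoc]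
  by_cases hb : i = b
  · subst hb
    simp [rotateRows, ha, add_mul, Finset.sum_add_distrib, one_apply, mul_assoc]
  simp [rotateRows, ha, hb, one_apply]

lemma rotateRows_mem_unitaryGroup (hab : a ≠ b) (hM : M ∈ unitaryGroup ι ℂ) :
    rotateRows a b θ M ∈ unitaryGroup ι ℂ := by
  have hG : rotateRows a b θ 1 ∈ unitaryGroup ι ℂ := by
    rw [mem_unitaryGroup_iff, star_rotateRows_one θ hab, rotateRows_one_mul]
    simpa using rotateRows_neg_rotateRows (-θ) 1 hab
  rw [← rotateRows_one_mul]
  exact mul_mem hG hM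

lemma norm_rotateRows_sub_le (hab : a ≠ b) (hM : M ∈ unitaryGroup ι ℂ) (i k : ι) :
    ‖rotateRows a b θ M i k - M i k‖ ≤ θ ^ 2 / 2 + |θ| := by
  have hrow : ∀ x y : ℂ, ‖x‖ ≤ 1 → ‖y‖ ≤ 1 →
      ‖(Real.cos θ - 1 : ℂ) * x + I * Real.sin θ * y‖ ≤ θ ^ 2 / 2 + |θ| := by
    intro x y hx hy
    have hcos : ‖(Real.cos θ - 1 : ℂ)‖ ≤ θ ^ 2 / 2 := by
      rw [← ofReal_one, ← ofReal_sub, norm_real, Real.norm_eq_abs,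
        abs_of_nonpos (by linarith [Real.cos_le_one θ])]
      linarith [Real.one_sub_sq_div_two_le_cos (x := θ)]
    have hsin : ‖I * Real.sin θ‖ ≤ |θ| := by
      rw [norm_mul, norm_I, one_mul, norm_real, Real.norm_eq_abs]
      exact Real.abs_sin_le_abs
    calc _ ≤ ‖(Real.cos θ - 1 : ℂ)‖ * ‖x‖ + ‖I * Real.sin θ‖ * ‖y‖ := by
          grw [norm_add_le, norm_mul, norm_mul]
      _ ≤ θ ^ 2 / 2 * 1 + |θ| * 1 := by gcongr
      _ = θ ^ 2 / 2 + |θ| := by ring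
  have hM1 := entry_norm_bound_of_unitary hM
  by_cases ha : i = a
  · subst ha
    rw [rotateRows_apply_left]
    convert hrow _ _ (hM1 i k) (hM1 b k) using 2
    ring
  by_cases hb : i = b
  · subst hb
    rw [rotateRows_apply_right _ _ hab]
    convert hrow _ _ (hM1 i k) (hM1 a k) using 2
    ring
  rw [rotateRows_apply_of_ne _ _ ha hb, sub_self, norm_zero]
  positivity

lemma sum_norm_rotateRows_map_ofReal_sub (hab : a ≠ b) (A : Matrix ι ι ℝ) (k : ι) :
    ∑ i, ‖rotateRows a b θ (A.map (↑)) i k‖ - ∑ i, ‖(A i k : ℂ)‖ =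
      √((Real.cos θ * A a k) ^ 2 + (Real.sin θ * A b k) ^ 2) +
        √((Real.sin θ * A a k) ^ 2 + (Real.cos θ * A b k) ^ 2) - (|A a k| + |A b k|) := by
  refine (sum_norm_rotateRows_sub θ (A.map (↑)) hab k).trans ?_
  rw [norm_rotateRows_map_ofReal_left, norm_rotateRows_map_ofReal_right θ hab]
  simp only [map_apply, norm_real, Real.norm_eq_abs]

theorem exists_unitary_near_sum_norm_lt (A : Matrix ι ι ℝ) (hA : A.map (↑) ∈ unitaryGroup ι ℂ)
    {a b k : ι} (hab : a ≠ b) (hk : |A a k| ≠ |A b k|) {ε : ℝ} (hε : 0 < ε) :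
    ∃ V ∈ unitaryGroup ι ℂ, (∀ i j, ‖V i j - A i j‖ < ε) ∧
      ∑ i, ∑ j, ‖(A i j : ℂ)‖ < ∑ i, ∑ j, ‖V i j‖ := by
  set θ := min (ε / 2) 1
  have hθ : 0 < θ := lt_min (half_pos hε) one_pos
  have hθ1 : θ ≤ 1 := min_le_right _ _
  have hθε : θ ≤ ε / 2 := min_le_left _ _
  have hcs : Real.cos θ * Real.sin θ ≠ 0 := by
    have := Real.pi_gt_three
    exact mul_ne_zero (Real.cos_pos_of_mem_Ioo ⟨by linarith, by linarith⟩).ne'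
      (Real.sin_pos_of_pos_of_lt_pi hθ (by linarith)).ne'
  have hcol := sum_norm_rotateRows_map_ofReal_sub θ hab A
  refine ⟨rotateRows a b θ (A.map (↑)), rotateRows_mem_unitaryGroup θ _ hab hA, fun i j => ?_, ?_⟩
  · calc _ ≤ θ ^ 2 / 2 + |θ| := norm_rotateRows_sub_le θ _ hab hA i j
      _ < ε := by rw [abs_of_pos hθ]; nlinarith
  · rw [Finset.sum_comm, Finset.sum_comm (f := fun i j => ‖rotateRows a b θ (A.map (↑)) i j‖)]
    refine Finset.sum_lt_sum (fun j _ => ?_) ⟨k, Finset.mem_univ _, ?_⟩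
    · linarith [hcol j, abs_add_abs_le_sqrt_add_sqrt (x := A a j) (y := A b j)
        (Real.cos_sq_add_sin_sq θ)]
    · linarith [hcol k, abs_add_abs_lt_sqrt_add_sqrt (Real.cos_sq_add_sin_sq θ) hcs hk]

lemma two_div_card_smul_sub_one_mem_unitaryGroup {ι : Type*} [Fintype ι] [DecidableEq ι]
    [Nonempty ι] :
    (2 / Fintype.card ι : ℂ) • of (fun _ _ => 1) - 1 ∈ unitaryGroup ι ℂ := by
  set J : Matrix ι ι ℂ := of fun _ _ => 1
  have hJJ : J * J = (Fintype.card ι : ℂ) • J := by ext; simp [J, mul_apply]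
  have hJ : star J = J := by ext; simp [J]
  have hN : (Fintype.card ι : ℂ) ≠ 0 := by simp
  rw [mem_unitaryGroup_iff, star_sub, star_smul, hJ, star_one]
  simp only [sub_mul, mul_sub, smul_mul_smul, hJJ, smul_smul, mul_one, one_mul]
  have hc : star (2 / Fintype.card ι : ℂ) = 2 / Fintype.card ι := by simp
  rw [hc, show (2 / Fintype.card ι : ℂ) * (2 / Fintype.card ι) * Fintype.card ι =
    2 / Fintype.card ι + 2 / Fintype.card ι by field_simp; ring, add_smul]
  abel

end Matrix

lemma abs_two_sub_div_ne_abs_two_div {x : ℝ} (h0 : x ≠ 0) (h4 : x ≠ 4) :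
    |(2 - x) / x| ≠ |2 / x| := by
  rw [abs_div, abs_div, Ne, div_left_inj' (abs_ne_zero.mpr h0), abs_eq_abs]
  rintro (h | h) <;> [exact h0 (by linarith); exact h4 (by linarith)]

/-- For `N ≥ 3`, `N ≠ 4`, the orthogonal matrix
`U = (1/N)(2·J_N − N·I_N)` (diagonal entries `(2−N)/N`, off-diagonal `2/N`),
viewed as a complex unitary, does not locally maximize the 1-norm on `U(N)`;
equivalently `K_N = √N·U` is not a complex almost Hadamard matrix. -/
theorem stmt15 (N : ℕ) (hN : 3 ≤ N) (hN4 : N ≠ 4) (U : Matrix (Fin N) (Fin N) ℂ)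
    (hU : U = Matrix.of fun i j =>
      if i = j then ((2 - (N : ℂ)) / N) else (2 / (N : ℂ))) :
    ¬ ∃ ε > (0 : ℝ), ∀ V ∈ Matrix.unitaryGroup (Fin N) ℂ,
      (∀ i j, ‖V i j - U i j‖ < ε) →
        ∑ i, ∑ j, ‖V i j‖ ≤ ∑ i, ∑ j, ‖U i j‖ := by
  rintro ⟨ε, hε, hmax⟩
  have : NeZero N := ⟨by omega⟩
  have hN0 : (N : ℂ) ≠ 0 := Nat.cast_ne_zero.mpr (by omega)
  let A : Matrix (Fin N) (Fin N) ℝ := Matrix.of fun i j => if i = j then (2 - N) / N else 2 / N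
  have hUA : U = A.map (↑) := by
    ext i j
    by_cases hij : i = j <;> simp [hU, A, hij]
  have hUJ : U = (2 / Fintype.card (Fin N) : ℂ) • Matrix.of (fun _ _ => 1) - 1 := by
    ext i j
    by_cases hij : i = j <;> simp [hU, hij]
    field_simp
  have hab : (0 : Fin N) ≠ 1 := by simp [Fin.ext_iff, Nat.mod_eq_of_lt (by omega : 1 < N)]
  have hcol : |A 0 0| ≠ |A 1 0| := by
    simpa [A, hab.symm] using
      abs_two_sub_div_ne_abs_two_div (x := N) (by simp; omega) (by exact_mod_cast hN4)
  obtain ⟨V, hV, hclose, hlt⟩ := Matrix.exists_unitary_near_sum_norm_lt A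
    (hUA ▸ hUJ ▸ Matrix.two_div_card_smul_sub_one_mem_unitaryGroup) hab hcol hε
  subst hUA
  exact (hmax V hV hclose).not_gt hlt
end

section
/- Let U ∈ O(N) be a real orthogonal circulant matrix with nonzero entries, U_{ij} = γ_{j−i} (indices mod N) with γ ∈ ℝ^N, γ_i ≠ 0 for all i. Set u = Σ_i γ_i (the common row sum of U), s = Σ_i sgn(γ_i), and w = Σ_i 1/|γ_i|. Then Φ(U, J_N) = N·u·(N·s − u·w), where J_N is the all-ones matrix. -/
open scoped Matrix

/-- For a real orthogonal circulant matrix `U_{ij} = γ_{j−i}` with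
nonzero entries, setting `u = ∑ γ_i`, `s = ∑ sgn(γ_i)`, `w = ∑ 1/|γ_i|`, one has
`Φ(U, J_N) = N·u·(N·s − u·w)`, where `J_N` is the all-ones matrix. -/
theorem stmt16 (N : ℕ) (γ : Fin N → ℝ) (hγ : ∀ i, γ i ≠ 0)
    (U : Matrix (Fin N) (Fin N) ℝ) (hUO : Uᵀ * U = 1)
    (hcirc : ∀ i j, U i j = γ (j - i)) :
    PhiR U (Matrix.of fun _ _ => (1 : ℝ)) =
      N * (∑ i, γ i) *
        (N * (∑ i, rsgn (γ i)) - (∑ i, γ i) * (∑ i, 1 / |γ i|)) := by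
  classical
  rcases Nat.eq_zero_or_pos N with hN | hN
  · subst hN
    simp [PhiR, Matrix.trace]
  haveI : NeZero N := ⟨hN.ne'⟩
  have key : ∀ (f : ℝ → ℝ) (i : Fin N), (∑ j, f (γ (j - i))) = ∑ j, f (γ j) :=
    fun f i => Fintype.sum_equiv (Equiv.subRight i) _ _ (fun x => rfl)
  have hrow : ∀ i, (∑ j, U i j) = ∑ j, γ j := by
    intro i; simp only [hcirc]; exact key (fun x => x) i
  have hsgncol : ∀ i, (∑ j, rsgn (U i j)) = ∑ j, rsgn (γ j) := by
    intro i; simp only [hcirc]; exact key rsgn i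
  unfold PhiR
  simp only [Matrix.trace, Matrix.diag, Matrix.mul_apply, Matrix.transpose_apply,
    Matrix.of_apply, mul_one, Finset.sum_const, Finset.card_univ, Fintype.card_fin,
    nsmul_eq_mul]
  have e1 : ∑ x : Fin N, ∑ x1 : Fin N, (∑ x2 : Fin N, rsgn (U x2 x) * U x2 x1) * (N:ℝ)
      = (N:ℝ) * ((N:ℝ) * ((∑ i, rsgn (γ i)) * (∑ i, γ i))) := by
    calc ∑ x : Fin N, ∑ x1 : Fin N, (∑ x2 : Fin N, rsgn (U x2 x) * U x2 x1) * (N:ℝ)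
        = ∑ x2 : Fin N, ∑ x : Fin N, ∑ x1 : Fin N, rsgn (U x2 x) * U x2 x1 * N := by
          simp only [Finset.sum_mul]
          rw [show (∑ x : Fin N, ∑ x1 : Fin N, ∑ x2 : Fin N, rsgn (U x2 x) * U x2 x1 * (N:ℝ))
              = ∑ x : Fin N, ∑ x2 : Fin N, ∑ x1 : Fin N, rsgn (U x2 x) * U x2 x1 * N from
            Finset.sum_congr rfl fun x _ => Finset.sum_comm]
          exact Finset.sum_comm
      _ = ∑ x2 : Fin N, (∑ x : Fin N, rsgn (U x2 x)) * ((∑ x1 : Fin N, U x2 x1) * N) := by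
          refine Finset.sum_congr rfl fun x2 _ => ?_
          rw [Finset.sum_mul]
          refine Finset.sum_congr rfl fun x _ => ?_
          simp only [Finset.sum_mul, Finset.mul_sum, mul_assoc]
      _ = ∑ _x2 : Fin N, (∑ i, rsgn (γ i)) * ((∑ i, γ i) * N) := by
          refine Finset.sum_congr rfl fun x2 _ => ?_
          rw [hsgncol, hrow]
      _ = (N:ℝ) * ((N:ℝ) * ((∑ i, rsgn (γ i)) * (∑ i, γ i))) := by
          rw [Finset.sum_const, Finset.card_univ, Fintype.card_fin, nsmul_eq_mul]; ring
  have e2 : ∑ x : Fin N, ∑ x1 : Fin N, (∑ x2 : Fin N, U x x2) ^ 2 / |U x x1|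
      = (N:ℝ) * ((∑ i, γ i) ^ 2 * (∑ i, 1 / |γ i|)) := by
    calc ∑ x : Fin N, ∑ x1 : Fin N, (∑ x2 : Fin N, U x x2) ^ 2 / |U x x1|
        = ∑ x : Fin N, ∑ x1 : Fin N, (∑ i, γ i) ^ 2 / |γ (x1 - x)| := by
          refine Finset.sum_congr rfl fun x _ => Finset.sum_congr rfl fun x1 _ => ?_
          rw [hrow, hcirc]
      _ = ∑ _x : Fin N, ∑ j, (∑ i, γ i) ^ 2 / |γ j| := by
          exact Finset.sum_congr rfl fun x _ => key (fun t => (∑ i, γ i) ^ 2 / |t|) x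
      _ = (N:ℝ) * ((∑ i, γ i) ^ 2 * (∑ i, 1 / |γ i|)) := by
          rw [Finset.sum_const, Finset.card_univ, Fintype.card_fin, nsmul_eq_mul]
          congr 1
          rw [Finset.mul_sum]
          exact Finset.sum_congr rfl fun j _ => by rw [div_eq_mul_one_div]
  rw [e1, e2]; ring
end

section
/- Let U ∈ U(N) be a circulant self-adjoint unitary matrix with nonzero entries, U_{ij} = γ_{i−j} (indices mod N) with γ_i ≠ 0 for all i. Then Φ(U, U) = N·(−1/|γ₀| + Σ_i |γ_i|). -/
open scoped Matrix ComplexConjugate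

/-- `Φ(U,B) = Tr(S*·U·B²) − ∑_{i,j} (Re[(UB)_{ij}·conj S_{ij}])²/|U_{ij}|`,
where `S_{ij} = sgn(U_{ij})`. -/
noncomputable def Phi {N : ℕ} (U B : Matrix (Fin N) (Fin N) ℂ) : ℝ :=
  (Matrix.trace ((Matrix.of fun i j => csgn (U i j))ᴴ * U * (B * B))).re -
    ∑ i, ∑ j, (((U * B) i j * conj (csgn (U i j))).re) ^ 2 / ‖U i j‖

/-! Because `U² = 1`, both `B² = U²` and `UB = U²` collapse to the identity: the trace term becomes
`∑ conj(S_{ij}) U_{ij} = ∑ |U_{ij}|`, and only the (real) diagonal entries survive in the second sum,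
each contributing `1/|U_{ii}|`. Circulance then makes every row a permutation of `γ`. -/

lemma conj_csgn_mul_self (z : ℂ) : conj (csgn z) * z = ‖z‖ := by
  rcases eq_or_ne z 0 with rfl | hz
  · simp
  have hnorm : (‖z‖ : ℂ) ≠ 0 := by exact_mod_cast norm_ne_zero_iff.mpr hz
  rw [csgn, map_div₀, Complex.conj_ofReal, div_mul_eq_mul_div, mul_comm, Complex.mul_conj,
    Complex.normSq_eq_norm_sq, div_eq_iff hnorm]
  push_cast
  ring

lemma re_conj_csgn_sq_div_norm_of_conj_eq {z : ℂ} (hz : conj z = z) :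
    (conj (csgn z)).re ^ 2 / ‖z‖ = 1 / ‖z‖ := by
  obtain ⟨x, rfl⟩ := Complex.conj_eq_iff_real.mp hz
  rcases eq_or_ne x 0 with rfl | hx
  · simp
  rw [csgn, Complex.norm_real, Real.norm_eq_abs, ← Complex.ofReal_div, Complex.conj_ofReal,
    Complex.ofReal_re, div_pow, sq_abs, div_self (pow_ne_zero 2 hx)]

lemma re_trace_conjTranspose_csgn_mul {N : ℕ} (U : Matrix (Fin N) (Fin N) ℂ) :
    (((Matrix.of fun i j => csgn (U i j))ᴴ * U).trace).re = ∑ i, ∑ j, ‖U i j‖ := by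
  simp only [Matrix.trace, Matrix.diag_apply, Matrix.mul_apply, Matrix.conjTranspose_apply,
    Matrix.of_apply, Complex.star_def, conj_csgn_mul_self, Complex.re_sum, Complex.ofReal_re]
  exact Finset.sum_comm

theorem Phi_self_of_isHermitian_of_mul_self {N : ℕ} {U : Matrix (Fin N) (Fin N) ℂ}
    (hsa : U.IsHermitian) (hU : U * U = 1) :
    Phi U U = ∑ i, ∑ j, ‖U i j‖ - ∑ i, 1 / ‖U i i‖ := by
  have hdiag : ∀ i, conj (U i i) = U i i := fun i => by
    simpa using congrFun (congrFun hsa.eq i) i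
  rw [Phi, hU, Matrix.mul_one, re_trace_conjTranspose_csgn_mul]
  congr 1
  refine Finset.sum_congr rfl fun i _ => ?_
  rw [Finset.sum_eq_single i (fun j _ hji => by simp [Matrix.one_apply_ne' hji]) (by simp),
    Matrix.one_apply_eq, one_mul, re_conj_csgn_sq_div_norm_of_conj_eq (hdiag i)]

lemma sum_sum_apply_sub {G M : Type*} [AddGroup G] [Fintype G] [AddCommMonoid M]
    (f : G → M) : ∑ i, ∑ j, f (i - j) = Fintype.card G • ∑ k, f k := by
  rw [← Finset.card_univ, ← Finset.sum_const]
  exact Finset.sum_congr rfl fun i _ => Fintype.sum_equiv (Equiv.subLeft i) _ _ fun _ => rfl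

theorem stmt17_general (N : ℕ) (hN : 0 < N) (γ : Fin N → ℂ)
    (U : Matrix (Fin N) (Fin N) ℂ)
    (hU : U ∈ Matrix.unitaryGroup (Fin N) ℂ)
    (hcirc : ∀ i j, U i j = γ (i - j))
    (hsa : U.IsHermitian) :
    Phi U U = N * (-(1 / ‖γ ⟨0, hN⟩‖) + ∑ i, ‖γ i‖) := by
  have : NeZero N := ⟨hN.ne'⟩
  have hUU : U * U = 1 := by
    simpa only [Matrix.star_eq_conjTranspose, hsa.eq] using hU.1
  rw [Phi_self_of_isHermitian_of_mul_self hsa hUU]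
  simp only [hcirc, sub_self, sum_sum_apply_sub fun k => ‖γ k‖, Finset.sum_const,
    Finset.card_univ, Fintype.card_fin, nsmul_eq_mul]
  rw [show (⟨0, hN⟩ : Fin N) = 0 from rfl]
  ring

/-- For a circulant (`U_{ij} = γ_{i−j}`) self-adjoint unitary matrix
with nonzero entries, `Φ(U,U) = N·(−1/|γ₀| + ∑_i |γ_i|)`. -/
theorem stmt17 (N : ℕ) (hN : 0 < N) (γ : Fin N → ℂ) (hγ : ∀ i, γ i ≠ 0)
    (U : Matrix (Fin N) (Fin N) ℂ)
    (hU : U ∈ Matrix.unitaryGroup (Fin N) ℂ)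
    (hcirc : ∀ i j, U i j = γ (i - j))
    (hsa : U.IsHermitian) :
    Phi U U = N * (-(1 / ‖γ ⟨0, hN⟩‖) + ∑ i, ‖γ i‖) :=
  stmt17_general N hN γ U hU hcirc hsa
end

section
/- Let H ∈ M_N(ℂ) be a complex Hadamard matrix and U = H/√N the associated unitary. Define E_U = { B ∈ M_N(ℂ) : B = B* and Φ(U,B) = 0 } and D_U = { A ∈ M_N(ℝ) : Σ_k conj(U_{ki})·U_{kj}·(A_{ki} − A_{kj}) = 0 for all i,j }. Then the ℝ-linear map B ↦ A, where A_{ij} = (UB)_{ij}·conj(U_{ij}), is a bijection from E_U onto D_U; in particular dim_ℝ E_U = dim_ℝ D_U. -/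
open scoped Matrix ComplexConjugate

/-!
Put `U = H/√N`: it is unitary and flat, all entries having modulus `r = 1/√N`, so `sgn U = U/r`.
For hermitian `B` write `w_ij = (UB)_ij · conj U_ij`. Then `Tr(S* U B²) = ‖UB‖²/r = ∑ |w_ij|²/r³`
while the subtracted sum is `∑ (Re w_ij)²/r³`, so `Φ(U,B) = r⁻³ ∑ (Im w_ij)²` and `E_U` consists of
the hermitian `B` for which `w` is real. As `U` is invertible with nonzero entries, `B` is determined
by `w`, namely `B = U* (w_ij / conj U_ij)`. For real `w = A`, flatness turns the defining sum of
`D_U` into `r² (B* − B)_ij`, so `B` is hermitian exactly when `A ∈ D_U`.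
-/

open Matrix

lemma Complex.norm_sq_div_sub_re_mul_conj_csgn_sq_div {u : ℂ} (hu : u ≠ 0) (x : ℂ) :
    ‖x‖ ^ 2 / ‖u‖ - (x * conj (csgn u)).re ^ 2 / ‖u‖ = (x * conj u).im ^ 2 / ‖u‖ ^ 3 := by
  have hu' : ‖u‖ ≠ 0 := norm_ne_zero_iff.2 hu
  have hre : (x * conj (csgn u)).re = (x * conj u).re / ‖u‖ := by
    rw [csgn, map_div₀, Complex.conj_ofReal, mul_div_assoc', Complex.div_ofReal_re]
  have hnorm : ‖x‖ ^ 2 * ‖u‖ ^ 2 = (x * conj u).re ^ 2 + (x * conj u).im ^ 2 := by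
    rw [← mul_pow, ← Complex.norm_conj u, ← norm_mul, Complex.sq_norm, Complex.normSq_apply]
    ring
  rw [hre]
  field_simp
  linear_combination hnorm

lemma Complex.mul_conj_of_norm_eq {u : ℂ} {r : ℝ} (hu : ‖u‖ = r) : u * conj u = (r : ℂ) ^ 2 := by
  rw [Complex.mul_conj, Complex.normSq_eq_norm_sq, hu, Complex.ofReal_pow]

section FlatUnitary

variable {n : Type*} [Fintype n] [DecidableEq n] {U : Matrix n n ℂ} {r : ℝ}

lemma entry_ne_zero_of_flat (hU : U ∈ unitaryGroup n ℂ) (hflat : ∀ i j, ‖U i j‖ = r)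
    (i j : n) : U i j ≠ 0 := by
  intro h0
  have hU0 : U = 0 := by
    ext k l
    rw [Matrix.zero_apply, ← norm_eq_zero, hflat, ← hflat i j, h0, norm_zero]
  have := congrFun (congrFun (mem_unitaryGroup_iff'.1 hU) j) j
  simp [hU0] at this

lemma sum_conj_mul_mul_sub_eq (hU : U ∈ unitaryGroup n ℂ) (hflat : ∀ i j, ‖U i j‖ = r)
    {B : Matrix n n ℂ} {A : Matrix n n ℝ}
    (hA : ∀ i j, (A i j : ℂ) = (U * B) i j * conj (U i j)) (i j : n) :
    ∑ k, conj (U k i) * U k j * ((A k i : ℂ) - A k j) = (r : ℂ) ^ 2 * (Bᴴ i j - B i j) := by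
  have hUU : Uᴴ * U = 1 := Unitary.star_mul_self_of_mem hU
  have hBh : Bᴴ i j = ∑ k, conj ((U * B) k i) * U k j := by
    have : (U * B)ᴴ * U = Bᴴ := by
      rw [conjTranspose_mul, Matrix.mul_assoc, hUU, Matrix.mul_one]
    rw [← this, mul_apply]
    rfl
  have hB : B i j = ∑ k, conj (U k i) * (U * B) k j := by
    conv_lhs => rw [← Matrix.one_mul B, ← hUU, Matrix.mul_assoc, mul_apply]
    rfl
  have hAconj : ∀ k l, (A k l : ℂ) = conj ((U * B) k l) * U k l := by
    intro k l
    rw [← Complex.conj_ofReal, hA, map_mul, Complex.conj_conj]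
  rw [hBh, hB, mul_sub, Finset.mul_sum, Finset.mul_sum, ← Finset.sum_sub_distrib]
  refine Finset.sum_congr rfl fun k _ => ?_
  rw [hAconj k i, hA k j]
  linear_combination (conj ((U * B) k i) * U k j) * Complex.mul_conj_of_norm_eq (hflat k i) -
    (conj (U k i) * (U * B) k j) * Complex.mul_conj_of_norm_eq (hflat k j)

lemma eq_of_mul_apply_mul_conj_eq (hU : U ∈ unitaryGroup n ℂ) (hne : ∀ i j, U i j ≠ 0)
    {B₁ B₂ : Matrix n n ℂ}
    (h : ∀ i j, (U * B₁) i j * conj (U i j) = (U * B₂) i j * conj (U i j)) : B₁ = B₂ := by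
  have hUB : U * B₁ = U * B₂ := by
    ext i j
    exact mul_right_cancel₀ ((map_ne_zero _).2 (hne i j)) (h i j)
  rw [← Matrix.one_mul B₁, ← Matrix.one_mul B₂, ← mem_unitaryGroup_iff'.1 hU, Matrix.mul_assoc,
    Matrix.mul_assoc, hUB]

lemma mul_conjTranspose_mul_apply_mul_conj (hU : U ∈ unitaryGroup n ℂ)
    (hne : ∀ i j, U i j ≠ 0) (A : Matrix n n ℂ) (i j : n) :
    (U * (Uᴴ * of fun k l => A k l / conj (U k l))) i j * conj (U i j) = A i j := by
  rw [← Matrix.mul_assoc, ← star_eq_conjTranspose U, mem_unitaryGroup_iff.1 hU, Matrix.one_mul,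
    of_apply, div_mul_cancel₀ _ ((map_ne_zero _).2 (hne i j))]

lemma isHermitian_iff_forall_sum_eq_zero (hU : U ∈ unitaryGroup n ℂ)
    (hflat : ∀ i j, ‖U i j‖ = r) {B : Matrix n n ℂ} {A : Matrix n n ℝ}
    (hA : ∀ i j, (A i j : ℂ) = (U * B) i j * conj (U i j)) :
    B.IsHermitian ↔ ∀ i j, ∑ k, conj (U k i) * U k j * ((A k i : ℂ) - A k j) = 0 := by
  simp only [sum_conj_mul_mul_sub_eq hU hflat hA]
  refine ⟨fun h i j => by rw [h.eq, sub_self, mul_zero], fun h => ?_⟩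
  ext i j
  have hr : (r : ℂ) ^ 2 ≠ 0 := by
    have hij := entry_ne_zero_of_flat hU hflat i j
    rw [← Complex.mul_conj_of_norm_eq (hflat i j)]
    exact mul_ne_zero hij ((map_ne_zero _).2 hij)
  exact sub_eq_zero.1 ((mul_eq_zero.1 (h i j)).resolve_left hr)

end FlatUnitary

lemma phi_eq_sum_im_sq {N : ℕ} {U : Matrix (Fin N) (Fin N) ℂ} {r : ℝ}
    (hU : U ∈ unitaryGroup (Fin N) ℂ) (hflat : ∀ i j, ‖U i j‖ = r)
    {B : Matrix (Fin N) (Fin N) ℂ} (hB : B.IsHermitian) :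
    Phi U B = ∑ i, ∑ j, ((U * B) i j * conj (U i j)).im ^ 2 / ‖U i j‖ ^ 3 := by
  have hUU : Uᴴ * U = 1 := Unitary.star_mul_self_of_mem hU
  have hS : (of fun i j => csgn (U i j)) = (r : ℂ)⁻¹ • U := by
    ext i j
    simp [csgn, hflat, div_eq_inv_mul]
  have hprod : (of fun i j => csgn (U i j))ᴴ * U * (B * B) = (r : ℂ)⁻¹ • ((U * B)ᴴ * (U * B)) := by
    rw [hS, conjTranspose_smul, Matrix.smul_mul, Matrix.smul_mul, hUU, Matrix.one_mul,
      conjTranspose_mul, hB.eq, Matrix.mul_assoc, ← Matrix.mul_assoc Uᴴ, hUU, Matrix.one_mul]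
    simp
  have htrace : (trace ((of fun i j => csgn (U i j))ᴴ * U * (B * B))).re
      = ∑ i, ∑ j, ‖(U * B) i j‖ ^ 2 / ‖U i j‖ := by
    have hfrob : (trace ((U * B)ᴴ * (U * B))).re = ∑ i, ∑ j, ‖(U * B) i j‖ ^ 2 := by
      simp only [trace, diag_apply, mul_apply, conjTranspose_apply, Complex.star_def,
        Complex.conj_mul', Complex.re_sum]
      rw [Finset.sum_comm]
      norm_cast
    rw [hprod, trace_smul, smul_eq_mul, ← Complex.ofReal_inv, Complex.re_ofReal_mul, hfrob,
      Finset.mul_sum]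
    simp only [Finset.mul_sum, hflat, div_eq_inv_mul]
  rw [Phi, htrace, ← Finset.sum_sub_distrib]
  refine Finset.sum_congr rfl fun i _ => ?_
  rw [← Finset.sum_sub_distrib]
  exact Finset.sum_congr rfl fun j _ =>
    Complex.norm_sq_div_sub_re_mul_conj_csgn_sq_div (entry_ne_zero_of_flat hU hflat i j) _

lemma phi_eq_zero_iff {N : ℕ} {U : Matrix (Fin N) (Fin N) ℂ} {r : ℝ}
    (hU : U ∈ unitaryGroup (Fin N) ℂ) (hflat : ∀ i j, ‖U i j‖ = r)
    {B : Matrix (Fin N) (Fin N) ℂ} (hB : B.IsHermitian) :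
    Phi U B = 0 ↔ ∀ i j, ((U * B) i j * conj (U i j)).im = 0 := by
  have hpos : ∀ i j, 0 < ‖U i j‖ ^ 3 := fun i j =>
    pow_pos (norm_pos_iff.2 (entry_ne_zero_of_flat hU hflat i j)) 3
  rw [phi_eq_sum_im_sq hU hflat hB, Finset.sum_eq_zero_iff_of_nonneg fun i _ =>
    Finset.sum_nonneg fun j _ => div_nonneg (sq_nonneg _) (hpos i j).le]
  refine forall_congr' fun i => ?_
  rw [Finset.sum_eq_zero_iff_of_nonneg fun j _ => div_nonneg (sq_nonneg _) (hpos i j).le]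
  simp [(hpos i _).ne']

lemma inv_sqrt_smul_mem_unitaryGroup {N : ℕ} {H : Matrix (Fin N) (Fin N) ℂ}
    (hH : H * Hᴴ = (N : ℂ) • 1) : ((Real.sqrt N : ℂ))⁻¹ • H ∈ unitaryGroup (Fin N) ℂ := by
  rw [mem_unitaryGroup_iff, star_eq_conjTranspose, conjTranspose_smul, Matrix.smul_mul,
    Matrix.mul_smul, hH, smul_smul, smul_smul]
  rcases N.eq_zero_or_pos with rfl | hN
  · exact Subsingleton.elim _ _
  have hsqrt : (Real.sqrt N : ℂ) * Real.sqrt N = N := by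
    rw [← Complex.ofReal_mul, Real.mul_self_sqrt (Nat.cast_nonneg N), Complex.ofReal_natCast]
  have hsqrt0 : (Real.sqrt N : ℂ) ≠ 0 := by
    exact_mod_cast (Real.sqrt_pos.2 (Nat.cast_pos.2 hN)).ne'
  rw [star_inv₀, Complex.star_def, Complex.conj_ofReal, ← hsqrt, ← mul_inv, inv_mul_cancel₀
    (mul_ne_zero hsqrt0 hsqrt0), one_smul]

/-- For a complex Hadamard matrix `H` and `U = H/√N`, the map
`B ↦ A`, `A_{ij} = (UB)_{ij}·conj(U_{ij})`, takes real values on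
`E_U = {B hermitian : Φ(U,B) = 0}` and is a bijection from `E_U` onto
`D_U = {A ∈ M_N(ℝ) : ∑_k conj(U_{ki})·U_{kj}·(A_{ki} − A_{kj}) = 0 ∀ i,j}`;
in particular `dim_ℝ E_U = dim_ℝ D_U`. -/
theorem stmt19 (N : ℕ) (H : Matrix (Fin N) (Fin N) ℂ)
    (hH1 : ∀ i j, ‖H i j‖ = 1)
    (hH2 : H * Hᴴ = (N : ℂ) • (1 : Matrix (Fin N) (Fin N) ℂ))
    (U : Matrix (Fin N) (Fin N) ℂ) (hU : U = ((Real.sqrt N : ℂ))⁻¹ • H)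
    (EU : Set (Matrix (Fin N) (Fin N) ℂ))
    (hEU : EU = {B | B.IsHermitian ∧ Phi U B = 0})
    (DU : Set (Matrix (Fin N) (Fin N) ℝ))
    (hDU : DU = {A | ∀ i j, ∑ k, conj (U k i) * U k j * ((A k i : ℂ) - (A k j : ℂ)) = 0}) :
    (∀ B ∈ EU, ∀ i j, ((U * B) i j * conj (U i j)).im = 0) ∧
    Set.BijOn (fun B => Matrix.of fun i j => ((U * B) i j * conj (U i j)).re) EU DU := by
  subst hEU hDU
  have hUnit : U ∈ unitaryGroup (Fin N) ℂ := hU ▸ inv_sqrt_smul_mem_unitaryGroup hH2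
  have hflat : ∀ i j, ‖U i j‖ = (Real.sqrt N)⁻¹ := by
    intro i j
    simp [hU, hH1]
  have hne := entry_ne_zero_of_flat hUnit hflat
  have him : ∀ B ∈ {B | B.IsHermitian ∧ Phi U B = 0}, ∀ i j,
      ((U * B) i j * conj (U i j)).im = 0 :=
    fun B hB => (phi_eq_zero_iff hUnit hflat hB.1).1 hB.2
  have hreal : ∀ B ∈ {B | B.IsHermitian ∧ Phi U B = 0}, ∀ i j,
      ((((U * B) i j * conj (U i j)).re : ℝ) : ℂ) = (U * B) i j * conj (U i j) :=
    fun B hB i j => Complex.ext rfl (by simp [him B hB i j])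
  refine ⟨him, fun B hB => ?_, fun B₁ hB₁ B₂ hB₂ h => ?_, fun A hA => ?_⟩
  · exact (isHermitian_iff_forall_sum_eq_zero hUnit hflat (hreal B hB)).1 hB.1
  · refine eq_of_mul_apply_mul_conj_eq hUnit hne fun i j => ?_
    rw [← hreal B₁ hB₁, ← hreal B₂ hB₂]
    exact congrArg _ (congrFun (congrFun h i) j)
  · set B := Uᴴ * of fun k l => (A k l : ℂ) / conj (U k l)
    have hBA : ∀ i j, (A i j : ℂ) = (U * B) i j * conj (U i j) := fun i j =>
      (mul_conjTranspose_mul_apply_mul_conj hUnit hne (A.map (↑)) i j).symm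
    have hB : B.IsHermitian := (isHermitian_iff_forall_sum_eq_zero hUnit hflat hBA).2 hA
    refine ⟨B, ⟨hB, (phi_eq_zero_iff hUnit hflat hB).2 fun i j => ?_⟩, ?_⟩
    · rw [← hBA, Complex.ofReal_im]
    · ext i j
      show ((U * B) i j * conj (U i j)).re = A i j
      rw [← hBA, Complex.ofReal_re]
end
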